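/- arXiv:1607.02454 — 4 statements merged into one kernel-verified Lean document; each statement's English description precedes it below -/
import Mathlib

section
/- Let θ ∈ (0, π/2), ω ∈ (0, 1/2], and m ∈ ℤ with m ≠ 0. For every u ∈ C_0^∞(Gui(θ); ℂ) one has ‖u‖²_{H¹(Gui(θ))} ≤ ∫_{Gui(θ)} (|∂_r u|² + |∂_z u|² + ((m−ω)² − 1/4) r^{−2} |u|²) dr dz + ∫_{Gui(θ)} |u|² dr dz ≤ 4(m−ω)² ‖u‖²_{H¹(Gui(θ))}, where ‖u‖²_{H¹(Gui(θ))} = ∫_{Gui(θ)} (|u|² + |∂_r u|² + |∂_z u|²) dr dz. (Norm equivalence for the non-axisymmetric fibers m ≠ 0.) -/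
open Real MeasureTheory

noncomputable section

/-- Continuity from continuity on an open set plus vanishing off a closed subset. -/
lemma continuous_aux {α : Type*} [TopologicalSpace α] {g : α → ℝ} {s K : Set α}
    (hs : IsOpen s) (hK : IsClosed K) (hKs : K ⊆ s)
    (h0 : ∀ x, x ∉ K → g x = 0) (hcont : ContinuousOn g s) : Continuous g := by
  rw [continuous_iff_continuousAt]
  intro x
  by_cases hx : x ∈ s
  · exact hcont.continuousAt (hs.mem_nhds hx)
  · have hx' : x ∈ Kᶜ := fun h => hx (hKs h)
    have hev : g =ᶠ[nhds x] fun _ => 0 :=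
      Filter.eventually_of_mem (hK.isOpen_compl.mem_nhds hx') fun y hy => h0 y hy
    exact (continuousAt_congr hev).mpr continuousAt_const

/-- 1D Hardy inequality for smooth functions compactly supported in `(0,∞)`. -/
lemma hardy1d (f : ℝ → ℂ) (hf : ContDiff ℝ (⊤ : ℕ∞) f) (hcs : HasCompactSupport f)
    (hsupp : tsupport f ⊆ Set.Ioi 0) :
    ∫ r, ‖f r‖ ^ 2 / r ^ 2 ≤ 4 * ∫ r, ‖deriv f r‖ ^ 2 := by
  have hdiff : Differentiable ℝ f := hf.differentiable (by simp)
  have hderiv_cont : Continuous (deriv f) := hf.continuous_deriv (by simp)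
  set Φ : ℝ → ℝ := fun r => ‖f r‖ ^ 2 / r with hΦdef
  -- pointwise derivative formulas
  have hΦderiv : ∀ r : ℝ, 0 < r →
      HasDerivAt Φ ((2 * ((starRingEnd ℂ) (f r) * deriv f r).re * r - ‖f r‖ ^ 2) / r ^ 2) r := by
    intro r hr
    have hfd : HasDerivAt f (deriv f r) r := (hdiff r).hasDerivAt
    have hre : HasDerivAt (fun s => (f s).re) ((deriv f r).re) r :=
      (Complex.reCLM.hasFDerivAt.comp_hasDerivAt r hfd)
    have him : HasDerivAt (fun s => (f s).im) ((deriv f r).im) r :=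
      (Complex.imCLM.hasFDerivAt.comp_hasDerivAt r hfd)
    have hnorm : HasDerivAt (fun s => ‖f s‖ ^ 2)
        (2 * ((starRingEnd ℂ) (f r) * deriv f r).re) r := by
      have h1 : HasDerivAt (fun s => (f s).re ^ 2 + (f s).im ^ 2)
          (2 * (f r).re * (deriv f r).re + 2 * (f r).im * (deriv f r).im) r := by
        have := ((hre.fun_pow 2).add (him.fun_pow 2))
        exact this.congr_deriv (by norm_num)
      have heq : (fun s => ‖f s‖ ^ 2) = fun s => (f s).re ^ 2 + (f s).im ^ 2 := by
        funext s
        rw [Complex.sq_norm, Complex.normSq_apply]; ring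
      rw [heq]
      convert h1 using 1
      simp [Complex.mul_re]
      ring
    have h := hnorm.div (hasDerivAt_id r) (ne_of_gt hr)
    have heq2 : (2 * ((starRingEnd ℂ) (f r) * deriv f r).re * id r - ‖f r‖ ^ 2 * 1) / id r ^ 2
        = (2 * ((starRingEnd ℂ) (f r) * deriv f r).re * r - ‖f r‖ ^ 2) / r ^ 2 := by
      simp
    exact heq2 ▸ h
  have key : ∀ r : ℝ, deriv Φ r =
      2 * (‖deriv f r‖ ^ 2 - ‖f r‖ ^ 2 / (4 * r ^ 2) - ‖deriv f r - f r / (2 * r)‖ ^ 2) := by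
    intro r
    by_cases hr : 0 < r
    · rw [(hΦderiv r hr).deriv]
      have hnorm : ∀ z : ℂ, ‖z‖ ^ 2 = z.re ^ 2 + z.im ^ 2 := by
        intro z; rw [Complex.sq_norm, Complex.normSq_apply]; ring
      simp only [hnorm, Complex.sub_re, Complex.sub_im, Complex.div_re, Complex.div_im,
        Complex.mul_re, Complex.mul_im, Complex.conj_re, Complex.conj_im, Complex.normSq_apply,
        Complex.ofReal_re, Complex.ofReal_im, Complex.re_ofNat, Complex.im_ofNat]
      have hr0 : r ≠ 0 := ne_of_gt hr
      have h2r : (2 * r : ℝ) ≠ 0 := by positivity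
      field_simp
      ring
    · -- r ∉ tsupport f, everything vanishes near r
      have hrt : r ∉ tsupport f := fun h => hr (hsupp h)
      have hopen : IsOpen (tsupport f)ᶜ := (isClosed_tsupport f).isOpen_compl
      have hf0 : f r = 0 := image_eq_zero_of_notMem_tsupport hrt
      have hd0 : deriv f r = 0 := by
        by_contra h
        exact hrt (support_deriv_subset (by simpa using h))
      have hΦ0 : deriv Φ r = 0 := by
        have hev : Φ =ᶠ[nhds r] fun _ => 0 := by
          refine Filter.eventually_of_mem (hopen.mem_nhds hrt) fun y hy => ?_
          simp [hΦdef, image_eq_zero_of_notMem_tsupport hy]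
        rw [hev.deriv_eq, deriv_const]
      rw [hΦ0, hf0, hd0]
      simp
  -- vanishing off the support
  have hKc : IsCompact (tsupport f) := hcs
  have hf0 : ∀ r ∉ tsupport f, f r = 0 := fun r hr => image_eq_zero_of_notMem_tsupport hr
  have hd0 : ∀ r ∉ tsupport f, deriv f r = 0 := fun r hr => by
    by_contra h; exact hr (support_deriv_subset (by simpa using h))
  -- continuity of the three integrands
  have contD : Continuous fun r => ‖deriv f r‖ ^ 2 := hderiv_cont.norm.pow 2
  have contF : Continuous fun r => ‖f r‖ ^ 2 / r ^ 2 := by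
    refine continuous_aux isOpen_Ioi (isClosed_tsupport f) hsupp
      (fun x hx => by simp [hf0 x hx]) ?_
    exact ((hf.continuous.norm.pow 2).continuousOn).div
      ((continuous_pow 2).continuousOn) (fun x hx => pow_ne_zero 2 (ne_of_gt hx))
  have contW : Continuous fun r => ‖deriv f r - f r / (2 * r)‖ ^ 2 := by
    refine continuous_aux isOpen_Ioi (isClosed_tsupport f) hsupp
      (fun x hx => by simp [hf0 x hx, hd0 x hx]) ?_
    refine (((hderiv_cont.continuousOn).sub ((hf.continuous.continuousOn).div
      (by fun_prop) (fun x hx => ?_))).norm.pow 2)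
    have : (x:ℝ) ≠ 0 := ne_of_gt hx
    simp [this]
  -- compact support of the integrands
  have csD : HasCompactSupport fun r => ‖deriv f r‖ ^ 2 :=
    HasCompactSupport.intro hKc fun x hx => by simp [hd0 x hx]
  have csF : HasCompactSupport fun r => ‖f r‖ ^ 2 / r ^ 2 :=
    HasCompactSupport.intro hKc fun x hx => by simp [hf0 x hx]
  have csW : HasCompactSupport fun r => ‖deriv f r - f r / (2 * r)‖ ^ 2 :=
    HasCompactSupport.intro hKc fun x hx => by simp [hf0 x hx, hd0 x hx]
  have intD : Integrable (fun r => ‖deriv f r‖ ^ 2) := contD.integrable_of_hasCompactSupport csD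
  have intF : Integrable (fun r => ‖f r‖ ^ 2 / r ^ 2) := contF.integrable_of_hasCompactSupport csF
  have intW : Integrable (fun r => ‖deriv f r - f r / (2 * r)‖ ^ 2) :=
    contW.integrable_of_hasCompactSupport csW
  -- the function A
  have hAeq : (fun r : ℝ => ‖f r‖ ^ 2 / (4 * r ^ 2)) = fun r => ‖f r‖ ^ 2 / r ^ 2 / 4 := by
    funext r; rw [div_div, mul_comm]
  have intA : Integrable (fun r : ℝ => ‖f r‖ ^ 2 / (4 * r ^ 2)) := by
    rw [hAeq]; exact intF.div_const 4
  have contA : Continuous fun r : ℝ => ‖f r‖ ^ 2 / (4 * r ^ 2) := by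
    rw [hAeq]; exact contF.div_const 4
  -- deriv Φ : integrability and continuity via the key identity
  have keyfun : deriv Φ = fun r =>
      2 * (‖deriv f r‖ ^ 2 - ‖f r‖ ^ 2 / (4 * r ^ 2) - ‖deriv f r - f r / (2 * r)‖ ^ 2) :=
    funext key
  have intΦ' : Integrable (deriv Φ) := by
    rw [keyfun]; exact (((intD.sub intA).sub intW).const_mul 2)
  have contΦ' : Continuous (deriv Φ) := by
    rw [keyfun]; exact (continuous_const.mul (((contD.sub contA).sub contW)))
  -- Φ has compact support and is differentiable
  have hΦcs : HasCompactSupport Φ := HasCompactSupport.intro hKc fun x hx => by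
    simp [hΦdef, hf0 x hx]
  have hΦdiff : ∀ r : ℝ, DifferentiableAt ℝ Φ r := by
    intro r
    rcases lt_or_ge 0 r with hr | hr
    · exact (hΦderiv r hr).differentiableAt
    · have hrt : r ∉ tsupport f := fun h => absurd (hsupp h) (not_lt.mpr hr)
      have hev : Φ =ᶠ[nhds r] fun _ => (0:ℝ) := by
        refine Filter.eventually_of_mem (((isClosed_tsupport f).isOpen_compl).mem_nhds hrt)
          fun y hy => ?_
        simp [hΦdef, hf0 y hy]
      exact ((hasDerivAt_const r (0:ℝ)).congr_of_eventuallyEq hev).differentiableAt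
  -- ∫ deriv Φ = 0
  have hΦint0 : ∫ r, deriv Φ r = 0 := by
    obtain ⟨R, hR⟩ := (Metric.isBounded_iff_subset_closedBall 0).mp hΦcs.isBounded
    rw [closedBall_eq_Icc] at hR
    set a : ℝ := 0 - |R| - 1 with ha
    set b : ℝ := 0 + |R| + 1 with hb
    have hab : a ≤ b := by rw [ha, hb]; linarith [abs_nonneg R]
    have habs1 := le_abs_self R
    have habs2 := neg_abs_le R
    have hsub : tsupport Φ ⊆ Set.Ioc a b := by
      refine hR.trans fun x hx => ?_
      have h1 := hx.1; have h2 := hx.2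
      constructor
      · rw [ha]; linarith
      · rw [hb]; linarith
    have hΦ0' : ∀ x ∉ Set.Ioc a b, deriv Φ x = 0 := by
      intro x hx
      have hxt : x ∉ tsupport Φ := fun h => hx (hsub h)
      by_contra h
      exact hxt (support_deriv_subset (f := Φ) (by simpa using h))
    rw [← setIntegral_eq_integral_of_forall_compl_eq_zero hΦ0',
      ← intervalIntegral.integral_of_le hab,
      intervalIntegral.integral_deriv_eq_sub (fun x _ => hΦdiff x)
        (contΦ'.intervalIntegrable a b)]
    have hΦa : Φ a = 0 := by
      refine image_eq_zero_of_notMem_tsupport fun h => ?_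
      have h5 := (hR h).1; rw [ha] at h5; linarith
    have hΦb : Φ b = 0 := by
      refine image_eq_zero_of_notMem_tsupport fun h => ?_
      have h5 := (hR h).2; rw [hb] at h5; linarith
    rw [hΦa, hΦb, sub_zero]
  -- put everything together
  have hWnn : 0 ≤ ∫ r, ‖deriv f r - f r / (2 * r)‖ ^ 2 :=
    integral_nonneg fun r => by positivity
  have hWsplit : (fun r => ‖deriv f r - f r / (2 * r)‖ ^ 2) = fun r =>
      ‖deriv f r‖ ^ 2 - ‖f r‖ ^ 2 / (4 * r ^ 2) - deriv Φ r / 2 := by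
    funext r
    have := key r
    linarith
  rw [hWsplit] at hWnn
  have int1 : Integrable (fun r => ‖deriv f r‖ ^ 2 - ‖f r‖ ^ 2 / (4 * r ^ 2)) :=
    intD.sub intA
  have int2 : Integrable (fun r => deriv Φ r / 2) := intΦ'.div_const 2
  rw [integral_sub int1 int2, integral_sub intD intA, integral_div, hΦint0] at hWnn
  have hA4 : ∫ r, ‖f r‖ ^ 2 / (4 * r ^ 2) = (∫ r, ‖f r‖ ^ 2 / r ^ 2) / 4 := by
    rw [hAeq, integral_div]
  rw [hA4] at hWnn
  linarith

/-- 2D Hardy inequality on the half-plane, in the first variable. -/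
lemma hardy2d (u : ℝ × ℝ → ℂ) (hu : ContDiff ℝ (⊤ : ℕ∞) u) (hcs : HasCompactSupport u)
    (hsupp : tsupport u ⊆ {p : ℝ × ℝ | 0 < p.1}) :
    ∫ p : ℝ × ℝ, ‖u p‖ ^ 2 / p.1 ^ 2 ≤ 4 * ∫ p : ℝ × ℝ, ‖fderiv ℝ u p (1, 0)‖ ^ 2 := by
  have hu0 : ∀ p ∉ tsupport u, u p = 0 := fun p hp => image_eq_zero_of_notMem_tsupport hp
  have hd0 : ∀ p ∉ tsupport u, fderiv ℝ u p = 0 := fun p hp => by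
    by_contra h; exact hp (support_fderiv_subset ℝ (by simpa using h))
  have hcontd : Continuous (fderiv ℝ u) := hu.continuous_fderiv (by simp)
  have hopen : IsOpen {p : ℝ × ℝ | 0 < p.1} := isOpen_lt continuous_const continuous_fst
  have contH : Continuous fun p : ℝ × ℝ => ‖fderiv ℝ u p (1, 0)‖ ^ 2 :=
    (hcontd.clm_apply continuous_const).norm.pow 2
  have intH : Integrable (fun p : ℝ × ℝ => ‖fderiv ℝ u p (1, 0)‖ ^ 2) :=
    contH.integrable_of_hasCompactSupport
      (HasCompactSupport.intro hcs fun p hp => by simp [hd0 p hp])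
  have contF : Continuous fun p : ℝ × ℝ => ‖u p‖ ^ 2 / p.1 ^ 2 := by
    refine continuous_aux hopen (isClosed_tsupport u) hsupp
      (fun p hp => by simp [hu0 p hp]) ?_
    exact ((hu.continuous.norm.pow 2).continuousOn).div
      ((continuous_fst.pow 2).continuousOn) (fun p hp => pow_ne_zero 2 (ne_of_gt hp))
  have intF : Integrable (fun p : ℝ × ℝ => ‖u p‖ ^ 2 / p.1 ^ 2) :=
    contF.integrable_of_hasCompactSupport
      (HasCompactSupport.intro hcs fun p hp => by simp [hu0 p hp])
  have hFeq : ∫ p : ℝ × ℝ, ‖u p‖ ^ 2 / p.1 ^ 2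
      = ∫ z : ℝ, ∫ r : ℝ, ‖u (r, z)‖ ^ 2 / r ^ 2 := integral_prod_symm _ intF
  have hHeq : ∫ p : ℝ × ℝ, ‖fderiv ℝ u p (1, 0)‖ ^ 2
      = ∫ z : ℝ, ∫ r : ℝ, ‖fderiv ℝ u (r, z) (1, 0)‖ ^ 2 := integral_prod_symm _ intH
  have hz : ∀ z : ℝ, (∫ r : ℝ, ‖u (r, z)‖ ^ 2 / r ^ 2)
      ≤ 4 * ∫ r : ℝ, ‖fderiv ℝ u (r, z) (1, 0)‖ ^ 2 := by
    intro z
    have hiso : Isometry (fun r : ℝ => (r, z)) := by intro x y; simp [Prod.edist_eq]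
    have hgc : ContDiff ℝ (⊤ : ℕ∞) (fun r : ℝ => u (r, z)) := hu.comp (contDiff_id.prodMk contDiff_const)
    have hgcs : HasCompactSupport (fun r : ℝ => u (r, z)) :=
      hcs.comp_isClosedEmbedding hiso.isClosedEmbedding
    have hgsupp : tsupport (fun r : ℝ => u (r, z)) ⊆ Set.Ioi 0 := by
      have h1 : tsupport (fun r : ℝ => u (r, z)) ⊆ (fun r : ℝ => (r, z)) ⁻¹' (tsupport u) := by
        refine closure_minimal (fun r hr => ?_)
          ((isClosed_tsupport u).preimage hiso.continuous)
        exact subset_closure hr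
      exact fun r hr => hsupp (h1 hr)
    have hgderiv : ∀ r : ℝ, deriv (fun r : ℝ => u (r, z)) r = fderiv ℝ u (r, z) (1, 0) := by
      intro r
      have hι : HasDerivAt (fun r : ℝ => (r, z)) ((1 : ℝ), (0 : ℝ)) r :=
        (hasDerivAt_id r).prodMk (hasDerivAt_const r z)
      exact (((hu.differentiable (by simp) (r, z)).hasFDerivAt).comp_hasDerivAt r hι).deriv
    have h := hardy1d (fun r : ℝ => u (r, z)) hgc hgcs hgsupp
    simp only [hgderiv] at h
    exact h
  have intFz : Integrable (fun z : ℝ => ∫ r : ℝ, ‖u (r, z)‖ ^ 2 / r ^ 2) :=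
    intF.integral_prod_right
  have intHz : Integrable (fun z : ℝ => ∫ r : ℝ, ‖fderiv ℝ u (r, z) (1, 0)‖ ^ 2) :=
    intH.integral_prod_right
  rw [hFeq, hHeq, ← MeasureTheory.integral_const_mul]
  exact integral_mono intFz (intHz.const_mul 4) hz

/-- The meridian domain `Gui(θ)` of the conical layer. -/
def Gui (θ : ℝ) : Set (ℝ × ℝ) :=
  {p | 0 < p.1 ∧ -π / Real.sin θ < p.2 ∧
    max 0 (p.2 * Real.tan θ) < p.1 ∧ p.1 < p.2 * Real.tan θ + π / Real.cos θ}

/-- Norm equivalence for the non-axisymmetric fibers `m ≠ 0`: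
`‖u‖²_{H¹} ≤ q_{ω,θ}^{[m]}[u] + ‖u‖²_{L²} ≤ 4(m-ω)² ‖u‖²_{H¹}`. -/
theorem norm_equivalence_nonaxisymmetric (θ ω : ℝ) (m : ℤ)
    (hθ : θ ∈ Set.Ioo 0 (π / 2)) (hω : ω ∈ Set.Ioc 0 (1 / 2)) (hm : m ≠ 0) :
    ∀ u : ℝ × ℝ → ℂ,
      ContDiff ℝ (⊤ : ℕ∞) u → HasCompactSupport u → tsupport u ⊆ Gui θ →
      (∫ p in Gui θ, (‖u p‖ ^ 2 + ‖fderiv ℝ u p (1, 0)‖ ^ 2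
          + ‖fderiv ℝ u p (0, 1)‖ ^ 2))
        ≤ (∫ p in Gui θ, (‖fderiv ℝ u p (1, 0)‖ ^ 2 + ‖fderiv ℝ u p (0, 1)‖ ^ 2
            + (((m : ℝ) - ω) ^ 2 - 1 / 4) / p.1 ^ 2 * ‖u p‖ ^ 2))
          + (∫ p in Gui θ, ‖u p‖ ^ 2) ∧
      (∫ p in Gui θ, (‖fderiv ℝ u p (1, 0)‖ ^ 2 + ‖fderiv ℝ u p (0, 1)‖ ^ 2
            + (((m : ℝ) - ω) ^ 2 - 1 / 4) / p.1 ^ 2 * ‖u p‖ ^ 2))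
          + (∫ p in Gui θ, ‖u p‖ ^ 2)
        ≤ 4 * ((m : ℝ) - ω) ^ 2 * ∫ p in Gui θ, (‖u p‖ ^ 2
            + ‖fderiv ℝ u p (1, 0)‖ ^ 2 + ‖fderiv ℝ u p (0, 1)‖ ^ 2) := by
  intro u hu hcs hsupp
  -- basic constants
  have hc2 : (1 : ℝ) / 4 ≤ ((m : ℝ) - ω) ^ 2 := by
    rcases hm.lt_or_gt with hm' | hm'
    · have h1' : m ≤ -1 := by omega
      have h1 : (m : ℝ) ≤ -1 := by exact_mod_cast h1'
      nlinarith [hω.1, hω.2]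
    · have h1 : (1 : ℝ) ≤ (m : ℝ) := by exact_mod_cast hm'
      nlinarith [hω.1, hω.2]
  -- vanishing off `Gui θ`
  have hu0 : ∀ p ∉ Gui θ, u p = 0 := fun p hp =>
    image_eq_zero_of_notMem_tsupport fun h => hp (hsupp h)
  have hd0 : ∀ p ∉ Gui θ, fderiv ℝ u p = 0 := fun p hp => by
    by_contra h; exact hp (hsupp (support_fderiv_subset ℝ (by simpa using h)))
  have hu0' : ∀ p ∉ tsupport u, u p = 0 := fun p hp => image_eq_zero_of_notMem_tsupport hp
  have hd0' : ∀ p ∉ tsupport u, fderiv ℝ u p = 0 := fun p hp => by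
    by_contra h; exact hp (support_fderiv_subset ℝ (by simpa using h))
  have hGuisub : Gui θ ⊆ {p : ℝ × ℝ | 0 < p.1} := fun p hp => hp.1
  have hsupp' : tsupport u ⊆ {p : ℝ × ℝ | 0 < p.1} := hsupp.trans hGuisub
  -- integrability of the pieces over ℝ²
  have hcontd : Continuous (fderiv ℝ u) := hu.continuous_fderiv (by simp)
  have hopen : IsOpen {p : ℝ × ℝ | 0 < p.1} := isOpen_lt continuous_const continuous_fst
  have iu : Integrable (fun p : ℝ × ℝ => ‖u p‖ ^ 2) :=
    ((hu.continuous.norm.pow 2)).integrable_of_hasCompactSupport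
      (HasCompactSupport.intro hcs fun p hp => by simp [hu0' p hp])
  have i1 : Integrable (fun p : ℝ × ℝ => ‖fderiv ℝ u p (1, 0)‖ ^ 2) :=
    ((hcontd.clm_apply continuous_const).norm.pow 2).integrable_of_hasCompactSupport
      (HasCompactSupport.intro hcs fun p hp => by simp [hd0' p hp])
  have i2 : Integrable (fun p : ℝ × ℝ => ‖fderiv ℝ u p (0, 1)‖ ^ 2) :=
    ((hcontd.clm_apply continuous_const).norm.pow 2).integrable_of_hasCompactSupport
      (HasCompactSupport.intro hcs fun p hp => by simp [hd0' p hp])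
  have iJ : Integrable (fun p : ℝ × ℝ => ‖u p‖ ^ 2 / p.1 ^ 2) := by
    refine (continuous_aux hopen (isClosed_tsupport u) hsupp'
      (fun p hp => by simp [hu0' p hp])
      (((hu.continuous.norm.pow 2).continuousOn).div
        ((continuous_fst.pow 2).continuousOn)
        (fun p hp => pow_ne_zero 2 (ne_of_gt hp)))).integrable_of_hasCompactSupport
      (HasCompactSupport.intro hcs fun p hp => by simp [hu0' p hp])
  -- shorthand for the four basic integrals
  set I0 := ∫ p : ℝ × ℝ, ‖u p‖ ^ 2 with hI0def
  set I1 := ∫ p : ℝ × ℝ, ‖fderiv ℝ u p (1, 0)‖ ^ 2 with hI1def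
  set I2 := ∫ p : ℝ × ℝ, ‖fderiv ℝ u p (0, 1)‖ ^ 2 with hI2def
  set J := ∫ p : ℝ × ℝ, ‖u p‖ ^ 2 / p.1 ^ 2 with hJdef
  have hI0 : 0 ≤ I0 := integral_nonneg fun p => by positivity
  have hI1 : 0 ≤ I1 := integral_nonneg fun p => by positivity
  have hI2 : 0 ≤ I2 := integral_nonneg fun p => by positivity
  have hJ : 0 ≤ J := integral_nonneg fun p => by positivity
  -- set integrals over Gui θ equal full integrals, and split
  have e0 : ∫ p in Gui θ, ‖u p‖ ^ 2 = I0 :=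
    setIntegral_eq_integral_of_forall_compl_eq_zero fun p hp => by simp [hu0 p hp]
  have eL : (∫ p in Gui θ, (‖u p‖ ^ 2 + ‖fderiv ℝ u p (1, 0)‖ ^ 2
      + ‖fderiv ℝ u p (0, 1)‖ ^ 2)) = I0 + I1 + I2 := by
    rw [setIntegral_eq_integral_of_forall_compl_eq_zero
      (fun p hp => by simp [hu0 p hp, hd0 p hp])]
    have ha : Integrable (fun p : ℝ × ℝ => ‖u p‖ ^ 2 + ‖fderiv ℝ u p (1, 0)‖ ^ 2) := iu.add i1
    rw [integral_add ha i2, integral_add iu i1]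
  have eQ : (∫ p in Gui θ, (‖fderiv ℝ u p (1, 0)‖ ^ 2 + ‖fderiv ℝ u p (0, 1)‖ ^ 2
      + (((m : ℝ) - ω) ^ 2 - 1 / 4) / p.1 ^ 2 * ‖u p‖ ^ 2))
      = I1 + I2 + (((m : ℝ) - ω) ^ 2 - 1 / 4) * J := by
    rw [setIntegral_eq_integral_of_forall_compl_eq_zero
      (fun p hp => by simp [hu0 p hp, hd0 p hp])]
    have hcong : (∫ p : ℝ × ℝ, (‖fderiv ℝ u p (1, 0)‖ ^ 2 + ‖fderiv ℝ u p (0, 1)‖ ^ 2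
        + (((m : ℝ) - ω) ^ 2 - 1 / 4) / p.1 ^ 2 * ‖u p‖ ^ 2))
        = ∫ p : ℝ × ℝ, (‖fderiv ℝ u p (1, 0)‖ ^ 2 + ‖fderiv ℝ u p (0, 1)‖ ^ 2
        + (((m : ℝ) - ω) ^ 2 - 1 / 4) * (‖u p‖ ^ 2 / p.1 ^ 2)) := by
      refine integral_congr_ae (Filter.Eventually.of_forall fun p => ?_)
      ring
    rw [hcong]
    have ha : Integrable (fun p : ℝ × ℝ => ‖fderiv ℝ u p (1, 0)‖ ^ 2
        + ‖fderiv ℝ u p (0, 1)‖ ^ 2) := i1.add i2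
    have hb : Integrable (fun p : ℝ × ℝ =>
        (((m : ℝ) - ω) ^ 2 - 1 / 4) * (‖u p‖ ^ 2 / p.1 ^ 2)) := iJ.const_mul _
    rw [integral_add ha hb, integral_add i1 i2, integral_const_mul]
  -- Hardy inequality
  have hardy : J ≤ 4 * I1 := hardy2d u hu hcs hsupp'
  have hkJ : (((m : ℝ) - ω) ^ 2 - 1 / 4) * J ≤ (((m : ℝ) - ω) ^ 2 - 1 / 4) * (4 * I1) :=
    mul_le_mul_of_nonneg_left hardy (by linarith)
  have hkJ0 : 0 ≤ (((m : ℝ) - ω) ^ 2 - 1 / 4) * J := mul_nonneg (by linarith) hJ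
  have he0 : 0 ≤ (4 * ((m : ℝ) - ω) ^ 2 - 1) * I0 := mul_nonneg (by linarith) hI0
  have he2 : 0 ≤ (4 * ((m : ℝ) - ω) ^ 2 - 1) * I2 := mul_nonneg (by linarith) hI2
  rw [e0, eL, eQ]
  constructor
  · linarith
  · nlinarith [hkJ, he0, he2]
end
end

section
/- Let θ ∈ (0, π/2), ω ∈ (0, 1/2], γ = (1/4 − ω²)/sin²θ, and n ≥ 1. For every u ∈ C_0^∞(Ω_θ; ℂ) whose support is contained in {(s,t) ∈ Ω_θ : s > n}, one has ∫_{Ω_θ} ( |∂_s u|² + |∂_t u|² − γ |u|²/(s + t cot θ)² ) ds dt ≥ (1 − γ/n²) ∫_{Ω_θ} |u|² ds dt. (Key lower bound for the Neumann bracketing proof that the essential spectrum starts at 1.) -/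
open Real MeasureTheory

noncomputable section

lemma poincare1D (f : ℝ → ℂ) (hf : ContDiff ℝ (⊤ : ℕ∞) f)
    (hsupp : tsupport f ⊆ Set.Ioo 0 π) :
    ∫ t, ‖f t‖ ^ 2 ≤ ∫ t, ‖deriv f t‖ ^ 2 := by
  classical
  set K : Set ℝ := tsupport f ∪ {π/2} with hK
  have hπ : (0:ℝ) < π := Real.pi_pos
  have hKsub : K ⊆ Set.Ioo 0 π := by
    rintro x (hx | hx)
    · exact hsupp hx
    · simp only [Set.mem_singleton_iff] at hx
      subst hx; constructor <;> [positivity; linarith]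
  have hKc : IsCompact K := by
    apply Metric.isCompact_of_isClosed_isBounded
    · exact (isClosed_tsupport f).union isClosed_singleton
    · exact (Metric.isBounded_Ioo 0 π).subset hKsub
  have hKne : K.Nonempty := ⟨π/2, Or.inr rfl⟩
  set a := sInf K with ha
  set b := sSup K with hb
  have haK : a ∈ K := hKc.sInf_mem hKne
  have hbK : b ∈ K := hKc.sSup_mem hKne
  have haI := hKsub haK
  have hbI := hKsub hbK
  have hKab : K ⊆ Set.Icc a b := fun x hx =>
    ⟨csInf_le hKc.bddBelow hx, le_csSup hKc.bddAbove hx⟩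
  set a' := a/2 with ha'
  set b' := (b+π)/2 with hb'
  have ha'0 : 0 < a' := by have := haI.1; simp only [ha']; linarith
  have ha'a : a' < a := by have := haI.1; simp only [ha']; linarith
  have hbb' : b < b' := by have := hbI.2; simp only [hb']; linarith
  have hb'π : b' < π := by have := hbI.2; simp only [hb']; linarith
  have hab : a ≤ b := (hKab haK).2
  have ha'b' : a' ≤ b' := by linarith
  -- key: support inside Ioo a' b'
  have hsub2 : tsupport f ⊆ Set.Ioo a' b' := fun x hx => by
    have := hKab (Or.inl hx); exact ⟨lt_of_lt_of_le ha'a this.1, lt_of_le_of_lt this.2 hbb'⟩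
  have hfd : Differentiable ℝ f := hf.differentiable (by simp)
  have hfc : Continuous f := hfd.continuous
  have hf'c : Continuous (deriv f) := hf.continuous_deriv (by simp)
  -- g and its derivative G
  set g : ℝ → ℝ := fun t => (f t).re ^ 2 + (f t).im ^ 2 with hg
  set G : ℝ → ℝ := fun t =>
    2 * (f t).re * (deriv f t).re + 2 * (f t).im * (deriv f t).im with hGdef
  have hgnorm : ∀ t, g t = ‖f t‖ ^ 2 := by
    intro t
    rw [hg]
    simp only [Complex.sq_norm, Complex.normSq_apply]
    ring
  have hgd : ∀ t, HasDerivAt g (G t) t := by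
    intro t
    have h0 : HasDerivAt f (deriv f t) t := (hfd t).hasDerivAt
    have hre : HasDerivAt (fun t => (f t).re) ((deriv f t).re) t :=
      (Complex.reCLM.hasFDerivAt.comp_hasDerivAt t h0)
    have him : HasDerivAt (fun t => (f t).im) ((deriv f t).im) t :=
      (Complex.imCLM.hasFDerivAt.comp_hasDerivAt t h0)
    have := ((hre.pow 2).add (him.pow 2))
    exact this.congr_deriv (by simp only [hGdef]; push_cast; ring)
  have hgcont : Continuous g := by
    rw [hg]; fun_prop
  have hGcont : Continuous G := by
    rw [hGdef]; fun_prop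
  have hgzero : ∀ t, t ∉ tsupport f → g t = 0 := by
    intro t ht
    have : f t = 0 := image_eq_zero_of_notMem_tsupport ht
    simp [hg, this]
  -- w and its derivative W
  set c : ℝ → ℝ := fun t => Real.cos t / Real.sin t with hc
  set w : ℝ → ℝ := fun t => c t * g t with hw
  set W : ℝ → ℝ := fun t => (-(1 / Real.sin t ^ 2)) * g t + c t * G t with hW
  have hsinpos : ∀ t ∈ Set.Icc a' b', 0 < Real.sin t := by
    intro t ht
    exact Real.sin_pos_of_pos_of_lt_pi (lt_of_lt_of_le ha'0 ht.1)
      (lt_of_le_of_lt ht.2 hb'π)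
  have hwd : ∀ t ∈ Set.Icc a' b', HasDerivAt w (W t) t := by
    intro t ht
    have hs := (hsinpos t ht).ne'
    have hcd : HasDerivAt c (-(1 / Real.sin t ^ 2)) t := by
      have := (Real.hasDerivAt_cos t).div (Real.hasDerivAt_sin t) hs
      have h1 : Real.sin t ^ 2 + Real.cos t ^ 2 = 1 := Real.sin_sq_add_cos_sq t
      exact this.congr_deriv (by rw [← h1]; ring)
    exact hcd.mul (hgd t)
  have hWcont : ContinuousOn W (Set.Icc a' b') := by
    apply ContinuousOn.add
    · apply ContinuousOn.mul _ hgcont.continuousOn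
      apply ContinuousOn.neg
      apply ContinuousOn.div continuousOn_const
      · exact (Real.continuous_sin.pow 2).continuousOn
      · intro t ht; exact pow_ne_zero 2 (hsinpos t ht).ne'
    · apply ContinuousOn.mul _ hGcont.continuousOn
      apply ContinuousOn.div Real.continuous_cos.continuousOn
        Real.continuous_sin.continuousOn
      intro t ht; exact (hsinpos t ht).ne'
  have hWint : IntervalIntegrable W volume a' b' := by
    apply ContinuousOn.intervalIntegrable
    rwa [Set.uIcc_of_le ha'b']
  -- FTC
  have hftc : ∫ t in a'..b', W t = w b' - w a' := by
    apply intervalIntegral.integral_eq_sub_of_hasDerivAt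
    · intro t ht
      rw [Set.uIcc_of_le ha'b'] at ht
      exact hwd t ht
    · exact hWint
  have hwa' : w a' = 0 := by
    have : a' ∉ tsupport f := fun h => absurd (hsub2 h).1 (lt_irrefl a')
    simp [hw, hgzero a' this]
  have hwb' : w b' = 0 := by
    have : b' ∉ tsupport f := fun h => absurd (hsub2 h).2 (lt_irrefl b')
    simp [hw, hgzero b' this]
  have hWzero : ∫ t in a'..b', W t = 0 := by rw [hftc, hwa', hwb', sub_zero]
  -- pointwise Cauchy-Schwarz
  have hpt : ∀ t ∈ Set.Icc a' b', g t ≤ ‖deriv f t‖ ^ 2 - W t := by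
    intro t ht
    have hs := hsinpos t ht
    have hs2 : (0:ℝ) < Real.sin t ^ 2 := by positivity
    have hnorm : ‖deriv f t‖ ^ 2 = (deriv f t).re ^ 2 + (deriv f t).im ^ 2 := by
      simp only [Complex.sq_norm, Complex.normSq_apply]
      ring
    have hsq1 : Real.sin t ^ 2 + Real.cos t ^ 2 = 1 := Real.sin_sq_add_cos_sq t
    have key : 0 ≤ ((deriv f t).re - c t * (f t).re) ^ 2
        + ((deriv f t).im - c t * (f t).im) ^ 2 := by positivity
    have hcsq : c t ^ 2 = 1 / Real.sin t ^ 2 - 1 := by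
      rw [hc]; field_simp; nlinarith [hsq1]
    simp only [hW, hnorm, hg, hGdef]
    nlinarith [key, hcsq, hs2]
  -- integrate
  have hgint : IntervalIntegrable g volume a' b' := hgcont.intervalIntegrable _ _
  have hnint : IntervalIntegrable (fun t => ‖deriv f t‖ ^ 2) volume a' b' :=
    ((hf'c.norm.pow 2)).intervalIntegrable _ _
  have hmain : ∫ t in a'..b', g t ≤ ∫ t in a'..b', ‖deriv f t‖ ^ 2 := by
    have h1 : ∫ t in a'..b', g t ≤ ∫ t in a'..b', (‖deriv f t‖ ^ 2 - W t) := by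
      apply intervalIntegral.integral_mono_on ha'b' hgint (hnint.sub hWint) hpt
    have h2 : ∫ t in a'..b', (‖deriv f t‖ ^ 2 - W t)
        = (∫ t in a'..b', ‖deriv f t‖ ^ 2) - ∫ t in a'..b', W t :=
      intervalIntegral.integral_sub hnint hWint
    rw [h2, hWzero, sub_zero] at h1
    exact h1
  -- convert to full-line integrals
  have hconv : ∀ (F : ℝ → ℝ), (∀ t ∉ tsupport f, F t = 0) →
      ∫ t, F t = ∫ t in a'..b', F t := by
    intro F hF
    rw [intervalIntegral.integral_of_le ha'b', integral_Ioc_eq_integral_Ioo]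
    symm
    apply setIntegral_eq_integral_of_forall_compl_eq_zero
    intro t ht
    exact hF t (fun h => ht (hsub2 h))
  have e1 : ∫ t, ‖f t‖ ^ 2 = ∫ t in a'..b', ‖f t‖ ^ 2 := by
    apply hconv
    intro t ht
    rw [image_eq_zero_of_notMem_tsupport ht]
    simp
  have e2 : ∫ t, ‖deriv f t‖ ^ 2 = ∫ t in a'..b', ‖deriv f t‖ ^ 2 := by
    apply hconv
    intro t ht
    have : deriv f t = 0 := by
      by_contra h
      exact ht (support_deriv_subset (Function.mem_support.mpr h))
    rw [this]; simp
  have e3 : ∫ t in a'..b', ‖f t‖ ^ 2 = ∫ t in a'..b', g t := by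
    apply intervalIntegral.integral_congr
    intro t _
    rw [hgnorm]
  rw [e1, e2, e3]
  exact hmain

/-- The half-strip with a corner `Ω_θ`. -/
def OmegaT (θ : ℝ) : Set (ℝ × ℝ) :=
  {p | 0 < p.2 ∧ p.2 < π ∧ -p.2 * Real.cot θ < p.1}

/-- Lower bound for the form `h_{ω,θ}` on test functions supported in
`{s > n}`, with `γ = (1/4 − ω²)/sin²θ`: the key estimate in the Neumann
bracketing proof that the essential spectrum starts at 1. -/
theorem bracketing_lower_bound (θ ω n : ℝ)
    (hθ : θ ∈ Set.Ioo 0 (π / 2)) (hω : ω ∈ Set.Ioc 0 (1 / 2)) (hn : 1 ≤ n) :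
    ∀ u : ℝ × ℝ → ℂ,
      ContDiff ℝ (⊤ : ℕ∞) u → HasCompactSupport u →
      tsupport u ⊆ {p ∈ OmegaT θ | n < p.1} →
      ∫ p in OmegaT θ, (‖fderiv ℝ u p (1, 0)‖ ^ 2 + ‖fderiv ℝ u p (0, 1)‖ ^ 2
          - (1 / 4 - ω ^ 2) / Real.sin θ ^ 2 * ‖u p‖ ^ 2
              / (p.1 + p.2 * Real.cot θ) ^ 2)
      ≥ (1 - (1 / 4 - ω ^ 2) / Real.sin θ ^ 2 / n ^ 2)
          * ∫ p in OmegaT θ, ‖u p‖ ^ 2 := by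
  intro u hu hcs hsupp
  obtain ⟨hθ0, hθπ⟩ := hθ
  obtain ⟨hω0, hω2⟩ := hω
  have hπ : (0:ℝ) < π := Real.pi_pos
  have hsθ : 0 < Real.sin θ := Real.sin_pos_of_pos_of_lt_pi hθ0 (by linarith)
  have hcθ : 0 < Real.cos θ := Real.cos_pos_of_mem_Ioo ⟨by linarith, hθπ⟩
  have hcotθ : 0 < Real.cot θ := by
    rw [Real.cot_eq_cos_div_sin]; positivity
  set γ := (1/4 - ω^2) / Real.sin θ ^ 2 with hγ
  have hγ0 : 0 ≤ γ := by
    apply div_nonneg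
    · nlinarith
    · positivity
  have hn0 : 0 < n := lt_of_lt_of_le one_pos hn
  have hden : ∀ p ∈ tsupport u, n < p.1 + p.2 * Real.cot θ := by
    intro p hp
    obtain ⟨hΩp, h5⟩ := hsupp hp
    obtain ⟨h2, h3, h4⟩ := hΩp
    nlinarith [mul_pos h2 hcotθ]
  -- vanishing off tsupport
  have huz : ∀ p, p ∉ tsupport u → u p = 0 := fun p hp => image_eq_zero_of_notMem_tsupport hp
  have hfz : ∀ p, p ∉ tsupport u → fderiv ℝ u p = 0 := by
    intro p hp
    by_contra h
    exact hp (support_fderiv_subset ℝ (Function.mem_support.mpr h))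
  have hnotΩ : ∀ p, p ∉ OmegaT θ → p ∉ tsupport u := fun p hp h => hp (hsupp h).1
  -- continuity / integrability
  have hucont : Continuous u := hu.continuous
  have hfder : Continuous (fderiv ℝ u) := hu.continuous_fderiv (by simp)
  have hAcont : Continuous fun p => ‖fderiv ℝ u p (1,0)‖^2 :=
    ((hfder.clm_apply continuous_const).norm.pow 2)
  have hBcont : Continuous fun p => ‖fderiv ℝ u p (0,1)‖^2 :=
    ((hfder.clm_apply continuous_const).norm.pow 2)
  have hDcont : Continuous fun p => ‖u p‖^2 := (hucont.norm.pow 2)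
  have hCcont : Continuous fun p : ℝ×ℝ => γ * ‖u p‖^2 / (p.1 + p.2 * Real.cot θ)^2 := by
    rw [continuous_iff_continuousAt]
    intro p
    by_cases hp : p ∈ tsupport u
    · have hd : (p.1 + p.2 * Real.cot θ) ≠ 0 := by have := hden p hp; linarith
      exact ContinuousAt.div
        ((continuous_const.mul hDcont).continuousAt)
        (((continuous_fst.add (continuous_snd.mul continuous_const)).pow 2).continuousAt)
        (pow_ne_zero 2 hd)
    · have hopen : IsOpen (tsupport u)ᶜ := (isClosed_tsupport u).isOpen_compl
      have hev : (fun p : ℝ×ℝ => γ * ‖u p‖^2 / (p.1 + p.2 * Real.cot θ)^2)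
          =ᶠ[nhds p] fun _ => (0:ℝ) := by
        filter_upwards [hopen.mem_nhds hp] with q hq
        simp [huz q hq]
      exact ContinuousAt.congr continuousAt_const hev.symm
  have hsuppsub : ∀ (F : ℝ×ℝ → ℝ), (∀ p, p ∉ tsupport u → F p = 0) → HasCompactSupport F := by
    intro F hF
    apply hcs.mono'
    intro p hp
    by_contra h
    exact hp (hF p h)
  have hcsA : HasCompactSupport fun p => ‖fderiv ℝ u p (1,0)‖^2 :=
    hsuppsub _ (fun p hp => by simp [hfz p hp])
  have hcsB : HasCompactSupport fun p => ‖fderiv ℝ u p (0,1)‖^2 :=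
    hsuppsub _ (fun p hp => by simp [hfz p hp])
  have hcsD : HasCompactSupport fun p => ‖u p‖^2 :=
    hsuppsub _ (fun p hp => by simp [huz p hp])
  have hcsC : HasCompactSupport fun p : ℝ×ℝ => γ * ‖u p‖^2 / (p.1 + p.2 * Real.cot θ)^2 :=
    hsuppsub _ (fun p hp => by simp [huz p hp])
  have intA : Integrable fun p => ‖fderiv ℝ u p (1,0)‖^2 :=
    hAcont.integrable_of_hasCompactSupport hcsA
  have intB : Integrable fun p => ‖fderiv ℝ u p (0,1)‖^2 :=
    hBcont.integrable_of_hasCompactSupport hcsB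
  have intD : Integrable fun p => ‖u p‖^2 :=
    hDcont.integrable_of_hasCompactSupport hcsD
  have intC : Integrable fun p : ℝ×ℝ => γ * ‖u p‖^2 / (p.1 + p.2 * Real.cot θ)^2 :=
    hCcont.integrable_of_hasCompactSupport hcsC
  -- convert set integrals to full integrals
  have hIF : ∫ p in OmegaT θ, (‖fderiv ℝ u p (1,0)‖^2 + ‖fderiv ℝ u p (0,1)‖^2
        - γ * ‖u p‖^2 / (p.1 + p.2 * Real.cot θ)^2)
      = ∫ p, (‖fderiv ℝ u p (1,0)‖^2 + ‖fderiv ℝ u p (0,1)‖^2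
        - γ * ‖u p‖^2 / (p.1 + p.2 * Real.cot θ)^2) := by
    apply setIntegral_eq_integral_of_forall_compl_eq_zero
    intro p hp
    have h := hnotΩ p hp
    simp [hfz p h, huz p h]
  have hID : ∫ p in OmegaT θ, ‖u p‖^2 = ∫ p, ‖u p‖^2 := by
    apply setIntegral_eq_integral_of_forall_compl_eq_zero
    intro p hp
    simp [huz p (hnotΩ p hp)]
  have hsplit : ∫ p, (‖fderiv ℝ u p (1,0)‖^2 + ‖fderiv ℝ u p (0,1)‖^2
        - γ * ‖u p‖^2 / (p.1 + p.2 * Real.cot θ)^2)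
      = (∫ p, ‖fderiv ℝ u p (1,0)‖^2) + (∫ p, ‖fderiv ℝ u p (0,1)‖^2)
        - ∫ p, γ * ‖u p‖^2 / (p.1 + p.2 * Real.cot θ)^2 := by
    have e1 := integral_sub (intA.add intB) intC
    have e2 := integral_add intA intB
    simp only [Pi.add_apply, Pi.sub_apply] at e1 e2
    rw [e1, e2]
  -- Fubini and the 1D Poincare inequality
  have hprod : (volume : Measure (ℝ×ℝ)) = (volume : Measure ℝ).prod volume :=
    Measure.volume_eq_prod _ _
  have intD' : Integrable (fun p : ℝ×ℝ => ‖u p‖^2) ((volume : Measure ℝ).prod volume) :=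
    hprod ▸ intD
  have intB' : Integrable (fun p : ℝ×ℝ => ‖fderiv ℝ u p (0,1)‖^2)
      ((volume : Measure ℝ).prod volume) := hprod ▸ intB
  have hBD : ∫ p, ‖u p‖^2 ≤ ∫ p, ‖fderiv ℝ u p (0,1)‖^2 := by
    rw [hprod, integral_prod _ intD', integral_prod _ intB']
    apply integral_mono intD'.integral_prod_left intB'.integral_prod_left
    intro s
    -- 1D Poincare for the slice
    have hfs : ContDiff ℝ (⊤ : ℕ∞) (fun t => u (s,t)) :=
      hu.comp (contDiff_const.prodMk contDiff_id)
    have hcl : IsClosed {t : ℝ | (s,t) ∈ tsupport u} :=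
      (isClosed_tsupport u).preimage (by fun_prop)
    have h2 : tsupport (fun t => u (s,t)) ⊆ {t : ℝ | (s,t) ∈ tsupport u} := by
      apply closure_minimal _ hcl
      intro t ht
      exact subset_tsupport u ht
    have hts : tsupport (fun t => u (s,t)) ⊆ Set.Ioo 0 π := by
      intro t ht
      obtain ⟨⟨h0, hπ', _⟩, _⟩ := hsupp (h2 ht)
      exact ⟨h0, hπ'⟩
    have hder : ∀ t, deriv (fun t => u (s,t)) t = fderiv ℝ u (s,t) (0,1) := by
      intro t
      have h1 : HasDerivAt (fun t : ℝ => ((s,t) : ℝ×ℝ)) (0,1) t :=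
        (hasDerivAt_const t s).prodMk (hasDerivAt_id t)
      have h2' : HasDerivAt (fun t => u (s,t)) (fderiv ℝ u (s,t) (0,1)) t :=
        ((hu.differentiable (by simp) (s,t)).hasFDerivAt).comp_hasDerivAt t h1
      exact h2'.deriv
    have := poincare1D _ hfs hts
    simp only [hder] at this
    exact this
  -- the potential term
  have hCD : ∫ p, γ * ‖u p‖^2 / (p.1 + p.2 * Real.cot θ)^2
      ≤ γ / n^2 * ∫ p, ‖u p‖^2 := by
    rw [← integral_const_mul]
    apply integral_mono intC (intD.const_mul (γ/n^2))
    intro p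
    by_cases hp : u p = 0
    · simp [hp]
    · have hpK : p ∈ tsupport u := subset_tsupport u (Function.mem_support.mpr hp)
      have h1 := hden p hpK
      have hd0 : 0 < p.1 + p.2 * Real.cot θ := by linarith
      have hn2 : n^2 ≤ (p.1 + p.2 * Real.cot θ)^2 := by nlinarith
      have h3 : γ * ‖u p‖^2 / (p.1 + p.2 * Real.cot θ)^2 ≤ γ * ‖u p‖^2 / n^2 :=
        div_le_div_of_nonneg_left (by positivity) (by positivity) hn2
      calc γ * ‖u p‖^2 / (p.1 + p.2 * Real.cot θ)^2 ≤ γ * ‖u p‖^2 / n^2 := h3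
        _ = γ / n^2 * ‖u p‖^2 := by ring
  have hA0 : 0 ≤ ∫ p, ‖fderiv ℝ u p (1,0)‖^2 :=
    integral_nonneg (fun p => by positivity)
  -- assemble
  rw [ge_iff_le, hID, hIF, hsplit]
  have hD0 : 0 ≤ ∫ p, ‖u p‖^2 := integral_nonneg (fun p => by positivity)
  nlinarith [hBD, hCD, hA0, hD0]
end
end

section
/- Let θ ∈ (0, π/2), ω ∈ (0, 1/2], γ = (1/4 − ω²)/sin²θ, p > 0, n ≥ 1, and let χ ∈ C_0^∞((1,2); ℝ) with ∫_1^2 |χ|² = 1. Define u_{n,p}(s,t) = n^{−1/2} χ(s/n) e^{ips} √(2/π) sin t on Ω_θ (extended by zero; its support lies in (n,2n) × (0,π) ⊂ Ω_θ). Then for every φ ∈ C_0^∞(Ω_θ; ℂ) one has | ∫_{Ω_θ} ( ∂_s φ ∂_s \overline{u_{n,p}} + ∂_t φ ∂_t \overline{u_{n,p}} − γ (s + t cot θ)^{−2} φ \overline{u_{n,p}} ) ds dt − (1+p²) ∫_{Ω_θ} φ \overline{u_{n,p}} ds dt | ≤ (γ/n²) ‖φ‖_{L²(Ω_θ)} +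 ( p ‖φ‖_{L²(Ω_θ)} + ‖∇φ‖_{L²(Ω_θ)} ) · n^{−1} ‖χ'‖_{L²(1,2)}. (Quantitative singular-sequence estimate used to prove [1,∞) ⊂ σ_ess.) -/
open Real MeasureTheory

noncomputable section

namespace SSE

/-- `Fa n χ s = n^{-1/2} χ(s/n) √(2/π)` -/
def Fa (n : ℕ) (χ : ℝ → ℝ) (s : ℝ) : ℝ := (Real.sqrt n)⁻¹ * χ (s / n) * Real.sqrt (2 / π)

/-- the derivative of `Fa` -/
def Fd (n : ℕ) (χ : ℝ → ℝ) (s : ℝ) : ℝ := (Real.sqrt n)⁻¹ * (deriv χ (s / n) / n) * Real.sqrt (2 / π)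

/-- plane wave -/
def Ee (p : ℝ) (s : ℝ) : ℂ := Complex.exp (Complex.I * p * s)

def W0 (n : ℕ) (p : ℝ) (χ : ℝ → ℝ) (q : ℝ × ℝ) : ℂ :=
  (Fa n χ q.1 : ℂ) * (Real.sin q.2 : ℂ) * Ee p q.1

def W1 (n : ℕ) (p : ℝ) (χ : ℝ → ℝ) (q : ℝ × ℝ) : ℂ :=
  (Fd n χ q.1 : ℂ) * (Real.sin q.2 : ℂ) * Ee p q.1

def W2 (n : ℕ) (p : ℝ) (χ : ℝ → ℝ) (q : ℝ × ℝ) : ℂ :=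
  (Fa n χ q.1 : ℂ) * (Real.cos q.2 : ℂ) * Ee p q.1

variable {n : ℕ} {p : ℝ} {χ : ℝ → ℝ}

lemma hasDerivAt_Fa (hχ : ContDiff ℝ (⊤ : ℕ∞) χ) (s : ℝ) :
    HasDerivAt (Fa n χ) (Fd n χ s) s := by
  have h1 : HasDerivAt (fun s : ℝ => χ (s / n)) (deriv χ (s / n) / n) s := by
    have := ((hχ.differentiable (by simp) (s / n)).hasDerivAt).comp s
      ((hasDerivAt_id s).div_const (n : ℝ))
    simpa [div_eq_mul_inv, mul_comm, Function.comp_def] using this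
  unfold Fa Fd
  simpa [mul_comm, mul_assoc, mul_left_comm] using
    (h1.const_mul ((Real.sqrt n)⁻¹)).mul_const (Real.sqrt (2 / π))

lemma hasDerivAt_Ee (p : ℝ) (s : ℝ) :
    HasDerivAt (Ee p) (Complex.I * p * Ee p s) s := by
  have h0 : HasDerivAt (fun s : ℝ => (s : ℂ)) 1 s := by
    simpa using (hasDerivAt_id s).ofReal_comp
  have h1 : HasDerivAt (fun s : ℝ => Complex.I * p * (s : ℂ)) (Complex.I * p) s := by
    simpa using h0.const_mul (Complex.I * p)
  unfold Ee
  simpa [mul_comm, mul_assoc, mul_left_comm] using h1.cexp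

/-- packaged CLM `(v₁, v₂) ↦ v₁ • A + v₂ • B` -/
def pd (A B : ℂ) : (ℝ × ℝ) →L[ℝ] ℂ :=
  (ContinuousLinearMap.fst ℝ ℝ ℝ).smulRight A + (ContinuousLinearMap.snd ℝ ℝ ℝ).smulRight B

@[simp] lemma pd_apply (A B : ℂ) (v : ℝ × ℝ) : pd A B v = v.1 • A + v.2 • B := by
  simp [pd]

lemma comp_fst {h : ℝ → ℂ} {h' : ℂ} {q : ℝ × ℝ} (hh : HasDerivAt h h' q.1) :
    HasFDerivAt (fun q : ℝ × ℝ => h q.1) (pd h' 0) q := by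
  have := hh.hasFDerivAt.comp q (hasFDerivAt_fst (p := q))
  refine HasFDerivAt.congr_fderiv this ?_
  refine ContinuousLinearMap.ext fun v => ?_
  simp

lemma comp_snd {h : ℝ → ℂ} {h' : ℂ} {q : ℝ × ℝ} (hh : HasDerivAt h h' q.2) :
    HasFDerivAt (fun q : ℝ × ℝ => h q.2) (pd 0 h') q := by
  have := hh.hasFDerivAt.comp q (hasFDerivAt_snd (p := q))
  refine HasFDerivAt.congr_fderiv this ?_
  refine ContinuousLinearMap.ext fun v => ?_
  simp

lemma w0_hasFDerivAt (hχ : ContDiff ℝ (⊤ : ℕ∞) χ) (q : ℝ × ℝ) :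
    HasFDerivAt (W0 n p χ)
      (pd (W1 n p χ q + Complex.I * p * W0 n p χ q) (W2 n p χ q)) q := by
  have h1 : HasFDerivAt (fun q : ℝ × ℝ => ((Fa n χ q.1 : ℝ) : ℂ)) (pd (Fd n χ q.1 : ℂ) 0) q :=
    comp_fst ((Complex.ofRealCLM.hasFDerivAt).comp_hasDerivAt q.1 (hasDerivAt_Fa hχ q.1))
  have h2 : HasFDerivAt (fun q : ℝ × ℝ => ((Real.sin q.2 : ℝ) : ℂ)) (pd 0 (Real.cos q.2 : ℂ)) q :=
    comp_snd ((Complex.ofRealCLM.hasFDerivAt).comp_hasDerivAt q.2 (Real.hasDerivAt_sin q.2))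
  have h3 : HasFDerivAt (fun q : ℝ × ℝ => Ee p q.1) (pd (Complex.I * p * Ee p q.1) 0) q :=
    comp_fst (hasDerivAt_Ee p q.1)
  have := (h1.mul h2).mul h3
  refine HasFDerivAt.congr_fderiv this ?_
  refine ContinuousLinearMap.ext fun v => ?_
  simp [W0, W1, W2, smul_eq_mul]
  ring

lemma w2_hasFDerivAt (hχ : ContDiff ℝ (⊤ : ℕ∞) χ) (q : ℝ × ℝ) :
    HasFDerivAt (W2 n p χ)
      (pd ((Fd n χ q.1 : ℂ) * (Real.cos q.2 : ℂ) * Ee p q.1 + Complex.I * p * W2 n p χ q)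
        (-W0 n p χ q)) q := by
  have h1 : HasFDerivAt (fun q : ℝ × ℝ => ((Fa n χ q.1 : ℝ) : ℂ)) (pd (Fd n χ q.1 : ℂ) 0) q :=
    comp_fst ((Complex.ofRealCLM.hasFDerivAt).comp_hasDerivAt q.1 (hasDerivAt_Fa hχ q.1))
  have h2 : HasFDerivAt (fun q : ℝ × ℝ => ((Real.cos q.2 : ℝ) : ℂ)) (pd 0 (-(Real.sin q.2) : ℂ)) q := by
    have := comp_snd (q := q)
      ((Complex.ofRealCLM.hasFDerivAt).comp_hasDerivAt q.2 (Real.hasDerivAt_cos q.2))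
    simpa using this
  have h3 : HasFDerivAt (fun q : ℝ × ℝ => Ee p q.1) (pd (Complex.I * p * Ee p q.1) 0) q :=
    comp_fst (hasDerivAt_Ee p q.1)
  have := (h1.mul h2).mul h3
  refine HasFDerivAt.congr_fderiv this ?_
  refine ContinuousLinearMap.ext fun v => ?_
  simp [W0, W1, W2, smul_eq_mul]
  ring

lemma integral_sin_sq_Ioo : ∫ t in Set.Ioo (0:ℝ) π, Real.sin t ^ 2 = π / 2 := by
  rw [← integral_Ioc_eq_integral_Ioo, ← intervalIntegral.integral_of_le Real.pi_pos.le,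
    integral_sin_sq]
  simp

lemma integrableOn_sin_sq : IntegrableOn (fun t => Real.sin t ^ 2) (Set.Ioo (0:ℝ) π) volume :=
  ((Real.continuous_sin.pow 2).integrableOn_Icc).mono_set Set.Ioo_subset_Icc_self

/-- Key product-structure L² bound. -/
lemma l2_bound {a : ℝ → ℝ} (ha : Continuous a) (hcs : HasCompactSupport a)
    {Ω : Set (ℝ × ℝ)} (hΩ : MeasurableSet Ω) (hsub : Ω ⊆ Set.univ ×ˢ Set.Ioo 0 π)
    {e : ℝ → ℂ} {f : ℝ × ℝ → ℂ}
    (hf : ∀ q : ℝ × ℝ, f q = (a q.1 : ℂ) * (Real.sin q.2 : ℂ) * e q.1)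
    (he : ∀ s, ‖e s‖ = 1) :
    IntegrableOn (fun q => ‖f q‖ ^ 2) Ω volume ∧
      ∫ q in Ω, ‖f q‖ ^ 2 ≤ (∫ s, (a s) ^ 2) * (π / 2) := by
  have hnorm : ∀ q : ℝ × ℝ, ‖f q‖ ^ 2 = (a q.1) ^ 2 * (Real.sin q.2) ^ 2 := by
    intro q
    rw [hf q, norm_mul, norm_mul, he, Complex.norm_real, Complex.norm_real, mul_one, mul_pow,
      Real.norm_eq_abs, Real.norm_eq_abs, sq_abs, sq_abs]
  have ha2 : Integrable (fun s => (a s) ^ 2) volume := by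
    have h2 : (fun s => (a s) ^ 2) = (fun s => a s * a s) := by ext s; ring
    exact (ha.pow 2).integrable_of_hasCompactSupport (by rw [pow_two]; exact hcs.mul_left)
  have hbig : IntegrableOn (fun q : ℝ × ℝ => (a q.1) ^ 2 * (Real.sin q.2) ^ 2)
      (Set.univ ×ˢ Set.Ioo 0 π) volume := by
    rw [IntegrableOn, Measure.volume_eq_prod, ← Measure.prod_restrict]
    exact Integrable.mul_prod (ha2.restrict (s := Set.univ)) integrableOn_sin_sq
  have hΩint : IntegrableOn (fun q : ℝ × ℝ => (a q.1) ^ 2 * (Real.sin q.2) ^ 2) Ω volume :=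
    hbig.mono_set hsub
  constructor
  · exact hΩint.congr_fun (fun q _ => (hnorm q).symm) hΩ
  · calc ∫ q in Ω, ‖f q‖ ^ 2 = ∫ q in Ω, (a q.1) ^ 2 * (Real.sin q.2) ^ 2 := by
          exact setIntegral_congr_fun hΩ fun q _ => hnorm q
    _ ≤ ∫ q in Set.univ ×ˢ Set.Ioo 0 π, (a q.1) ^ 2 * (Real.sin q.2) ^ 2 := by
          apply setIntegral_mono_set hbig
          · exact Filter.Eventually.of_forall fun q => mul_nonneg (sq_nonneg _) (sq_nonneg _)
          · exact HasSubset.Subset.eventuallyLE hsub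
    _ = (∫ x in (Set.univ : Set ℝ), a x ^ 2) * ∫ t in Set.Ioo (0:ℝ) π, Real.sin t ^ 2 := by
          rw [Measure.volume_eq_prod]
          exact setIntegral_prod_mul (fun x => a x ^ 2) (fun t => Real.sin t ^ 2) _ _
    _ = (∫ s, (a s) ^ 2) * (π / 2) := by
          rw [integral_sin_sq_Ioo, setIntegral_univ]

lemma int_comp (g : ℝ → ℝ) (hsupp : ∀ x ∉ Set.Ioo (1:ℝ) 2, g x = 0) (n : ℕ) :
    ∫ s, g (s / n) = n * ∫ x in Set.Ioo (1:ℝ) 2, g x := by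
  rw [MeasureTheory.Measure.integral_comp_div g n,
    setIntegral_eq_integral_of_forall_compl_eq_zero hsupp]
  simp [abs_of_nonneg (by positivity : (0:ℝ) ≤ (n:ℝ))]

lemma integral_Fa_sq (hn : 1 ≤ n) (hsupp : tsupport χ ⊆ Set.Ioo 1 2) :
    ∫ s, (Fa n χ s) ^ 2 = 2 / π * ∫ x in Set.Ioo (1:ℝ) 2, (χ x) ^ 2 := by
  have hn0 : (0:ℝ) < n := by exact_mod_cast hn
  have hptw : ∀ s, (Fa n χ s) ^ 2 = ((n:ℝ)⁻¹ * (2 / π)) * (fun x => χ x ^ 2) (s / n) := by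
    intro s
    unfold Fa
    have h2 : (Real.sqrt (2 / π)) ^ 2 = 2 / π := Real.sq_sqrt (by positivity)
    simp only []
    rw [mul_pow, mul_pow, ← Real.sqrt_inv, Real.sq_sqrt (by positivity), h2]
    ring
  rw [integral_congr_ae (Filter.Eventually.of_forall hptw), MeasureTheory.integral_const_mul,
    int_comp (fun x => χ x ^ 2) (fun x hx => by
      simp [image_eq_zero_of_notMem_tsupport (fun hmem => hx (hsupp hmem))]) n]
  field_simp

lemma integral_Fd_sq (hn : 1 ≤ n) (hsupp : tsupport χ ⊆ Set.Ioo 1 2) :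
    ∫ s, (Fd n χ s) ^ 2 = ((n:ℝ) ^ 2)⁻¹ * (2 / π) * ∫ x in Set.Ioo (1:ℝ) 2, (deriv χ x) ^ 2 := by
  have hn0 : (0:ℝ) < n := by exact_mod_cast hn
  have hptw : ∀ s, (Fd n χ s) ^ 2
      = ((n:ℝ)⁻¹ * ((n:ℝ)^2)⁻¹ * (2 / π)) * (fun x => deriv χ x ^ 2) (s / n) := by
    intro s
    unfold Fd
    have h2 : (Real.sqrt (2 / π)) ^ 2 = 2 / π := Real.sq_sqrt (by positivity)
    simp only []
    rw [mul_pow, mul_pow, ← Real.sqrt_inv, Real.sq_sqrt (by positivity), h2, div_pow]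
    field_simp
  have hsupp' : ∀ x ∉ Set.Ioo (1:ℝ) 2, deriv χ x ^ 2 = 0 := by
    intro x hx
    have : deriv χ x = 0 := by
      by_contra h
      exact hx (hsupp (support_deriv_subset (by simpa [Function.mem_support] using h)))
    simp [this]
  rw [integral_congr_ae (Filter.Eventually.of_forall hptw), MeasureTheory.integral_const_mul,
    int_comp (fun x => deriv χ x ^ 2) hsupp' n]
  field_simp

/-- Cauchy–Schwarz for complex integrals. -/
lemma cs_bound {α : Type*} [MeasurableSpace α] {μ : Measure α} {f g : α → ℂ}
    (hf : AEStronglyMeasurable f μ) (hg : AEStronglyMeasurable g μ)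
    (hf2 : Integrable (fun x => ‖f x‖ ^ 2) μ) (hg2 : Integrable (fun x => ‖g x‖ ^ 2) μ) :
    ‖∫ x, f x * g x ∂μ‖
      ≤ Real.sqrt (∫ x, ‖f x‖ ^ 2 ∂μ) * Real.sqrt (∫ x, ‖g x‖ ^ 2 ∂μ) := by
  have h22 : Real.HolderConjugate 2 2 := Real.HolderConjugate.two_two
  have hmf : MemLp (fun x => ‖f x‖) (ENNReal.ofReal 2) μ := by
    rw [show ENNReal.ofReal 2 = 2 by simp]
    exact (memLp_two_iff_integrable_sq hf.norm).mpr hf2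
  have hmg : MemLp (fun x => ‖g x‖) (ENNReal.ofReal 2) μ := by
    rw [show ENNReal.ofReal 2 = 2 by simp]
    exact (memLp_two_iff_integrable_sq hg.norm).mpr hg2
  have key := integral_mul_le_Lp_mul_Lq_of_nonneg h22
    (Filter.Eventually.of_forall fun x => norm_nonneg (f x))
    (Filter.Eventually.of_forall fun x => norm_nonneg (g x)) hmf hmg
  have hrw : ∀ h : α → ℂ, ∫ x, ‖h x‖ ^ (2:ℝ) ∂μ = ∫ x, ‖h x‖ ^ 2 ∂μ := by
    intro h
    apply integral_congr_ae
    refine Filter.Eventually.of_forall fun x => ?_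
    have h2 : ((2:ℕ):ℝ) = (2:ℝ) := by norm_num
    calc ‖h x‖ ^ (2:ℝ) = ‖h x‖ ^ ((2:ℕ):ℝ) := by rw [h2]
    _ = ‖h x‖ ^ (2:ℕ) := Real.rpow_natCast _ 2
  rw [hrw, hrw] at key
  calc ‖∫ x, f x * g x ∂μ‖ ≤ ∫ x, ‖f x * g x‖ ∂μ := norm_integral_le_integral_norm _
  _ = ∫ x, ‖f x‖ * ‖g x‖ ∂μ := by
        apply integral_congr_ae
        exact Filter.Eventually.of_forall fun x => norm_mul _ _
  _ ≤ (∫ x, ‖f x‖ ^ 2 ∂μ) ^ ((1:ℝ)/2) * (∫ x, ‖g x‖ ^ 2 ∂μ) ^ ((1:ℝ)/2) := key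
  _ = Real.sqrt (∫ x, ‖f x‖ ^ 2 ∂μ) * Real.sqrt (∫ x, ‖g x‖ ^ 2 ∂μ) := by
        rw [Real.sqrt_eq_rpow, Real.sqrt_eq_rpow]

lemma norm_Ee (p s : ℝ) : ‖Ee p s‖ = 1 := by
  unfold Ee
  rw [Complex.norm_exp]
  norm_num [Complex.mul_re, Complex.mul_im]

lemma conj_ree (x y : ℝ) (p s : ℝ) :
    (starRingEnd ℂ) ((x : ℂ) * (y : ℂ) * Ee p s) = (x : ℂ) * (y : ℂ) * Ee (-p) s := by
  unfold Ee
  rw [map_mul, map_mul, Complex.conj_ofReal, Complex.conj_ofReal, ← Complex.exp_conj]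
  congr 2
  simp [map_mul, Complex.conj_I, Complex.conj_ofReal]

lemma hcs_comp_div (hcs : HasCompactSupport χ) (hn : 1 ≤ n) :
    HasCompactSupport (fun s : ℝ => χ (s / (n : ℝ))) := by
  have hne : ((n:ℝ)) ≠ 0 := by positivity
  have h := hcs.comp_homeomorph (Homeomorph.mulRight₀ ((n:ℝ))⁻¹ (inv_ne_zero hne))
  have : (fun s : ℝ => χ (s / (n : ℝ)))
      = χ ∘ (Homeomorph.mulRight₀ ((n:ℝ))⁻¹ (inv_ne_zero hne)) := by
    funext s
    simp [div_eq_mul_inv, Homeomorph.mulRight₀]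
    exact rfl
  rw [this]
  exact h

lemma hcs_Fa (hcs : HasCompactSupport χ) (hn : 1 ≤ n) : HasCompactSupport (Fa n χ) := by
  apply HasCompactSupport.intro (hcs_comp_div hcs hn)
  intro x hx
  unfold Fa
  rw [image_eq_zero_of_notMem_tsupport hx]
  ring

lemma hcs_Fd (hcs : HasCompactSupport χ) (hχ : ContDiff ℝ (⊤ : ℕ∞) χ) (hn : 1 ≤ n) :
    HasCompactSupport (Fd n χ) := by
  apply HasCompactSupport.intro (hcs_comp_div (χ := deriv χ) hcs.deriv hn)
  intro x hx
  unfold Fd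
  rw [image_eq_zero_of_notMem_tsupport hx]
  ring

lemma continuous_Fa (hχ : ContDiff ℝ (⊤ : ℕ∞) χ) : Continuous (Fa n χ) := by
  unfold Fa
  exact (continuous_const.mul (hχ.continuous.comp (continuous_id.div_const _))).mul continuous_const

lemma continuous_Fd (hχ : ContDiff ℝ (⊤ : ℕ∞) χ) : Continuous (Fd n χ) := by
  unfold Fd
  exact (continuous_const.mul
    (((hχ.continuous_deriv (by simp)).comp (continuous_id.div_const _)).div_const _)).mul
    continuous_const

lemma continuous_Ee (p : ℝ) : Continuous (Ee p) := by
  unfold Ee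
  exact Complex.continuous_exp.comp (continuous_const.mul Complex.continuous_ofReal)

lemma continuous_W0 (hχ : ContDiff ℝ (⊤ : ℕ∞) χ) : Continuous (W0 n p χ) := by
  unfold W0
  exact ((Complex.continuous_ofReal.comp ((continuous_Fa hχ).comp continuous_fst)).mul
    (Complex.continuous_ofReal.comp (Real.continuous_sin.comp continuous_snd))).mul
    ((continuous_Ee p).comp continuous_fst)

lemma continuous_W1 (hχ : ContDiff ℝ (⊤ : ℕ∞) χ) : Continuous (W1 n p χ) := by
  unfold W1
  exact ((Complex.continuous_ofReal.comp ((continuous_Fd hχ).comp continuous_fst)).mul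
    (Complex.continuous_ofReal.comp (Real.continuous_sin.comp continuous_snd))).mul
    ((continuous_Ee p).comp continuous_fst)

lemma continuous_W2 (hχ : ContDiff ℝ (⊤ : ℕ∞) χ) : Continuous (W2 n p χ) := by
  unfold W2
  exact ((Complex.continuous_ofReal.comp ((continuous_Fa hχ).comp continuous_fst)).mul
    (Complex.continuous_ofReal.comp (Real.continuous_cos.comp continuous_snd))).mul
    ((continuous_Ee p).comp continuous_fst)

end SSE

open SSE

/-- Quantitative singular-sequence estimate used to prove `[1,∞) ⊂ σ_ess`:
with `u_{n,p}(s,t) = n^{-1/2} χ(s/n) e^{ips} √(2/π) sin t` and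
`γ = (1/4 − ω²)/sin²θ`, the sesquilinear form of `h_{ω,θ}` applied to a test
function `φ` and `u_{n,p}`, minus `(1+p²)⟨φ, u_{n,p}⟩`, is explicitly small. -/
theorem singular_sequence_estimate (θ ω p : ℝ) (n : ℕ)
    (hθ : θ ∈ Set.Ioo 0 (π / 2)) (hω : ω ∈ Set.Ioc 0 (1 / 2))
    (hp : 0 < p) (hn : 1 ≤ n)
    (χ : ℝ → ℝ) (hχ : ContDiff ℝ (⊤ : ℕ∞) χ) (hχs : HasCompactSupport χ)
    (hχsupp : tsupport χ ⊆ Set.Ioo 1 2)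
    (hχnorm : ∫ x in Set.Ioo (1 : ℝ) 2, (χ x) ^ 2 = 1)
    (unp : ℝ × ℝ → ℂ)
    (hunp : ∀ q : ℝ × ℝ, unp q =
      ((Real.sqrt n)⁻¹ * χ (q.1 / n) * Real.sqrt (2 / π) * Real.sin q.2 : ℝ)
        * Complex.exp (Complex.I * p * q.1)) :
    ∀ φ : ℝ × ℝ → ℂ,
      ContDiff ℝ (⊤ : ℕ∞) φ → HasCompactSupport φ → tsupport φ ⊆ OmegaT θ →
      ‖(∫ q in OmegaT θ,
            (fderiv ℝ φ q (1, 0) * (starRingEnd ℂ) (fderiv ℝ unp q (1, 0))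
              + fderiv ℝ φ q (0, 1) * (starRingEnd ℂ) (fderiv ℝ unp q (0, 1))
              - (((1 / 4 - ω ^ 2) / Real.sin θ ^ 2
                    / (q.1 + q.2 * Real.cot θ) ^ 2 : ℝ) : ℂ)
                  * (φ q * (starRingEnd ℂ) (unp q))))
          - ((1 + p ^ 2 : ℝ) : ℂ)
              * ∫ q in OmegaT θ, φ q * (starRingEnd ℂ) (unp q)‖
      ≤ (1 / 4 - ω ^ 2) / Real.sin θ ^ 2 / (n : ℝ) ^ 2
            * Real.sqrt (∫ q in OmegaT θ, ‖φ q‖ ^ 2)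
        + (p * Real.sqrt (∫ q in OmegaT θ, ‖φ q‖ ^ 2)
            + Real.sqrt (∫ q in OmegaT θ,
                (‖fderiv ℝ φ q (1, 0)‖ ^ 2 + ‖fderiv ℝ φ q (0, 1)‖ ^ 2)))
          * (n : ℝ)⁻¹ * Real.sqrt (∫ x in Set.Ioo (1 : ℝ) 2, (deriv χ x) ^ 2) := by

  intro φ hφ hφs hφΩ
  -- basic positivity facts
  have hsθ : 0 < Real.sin θ := Real.sin_pos_of_pos_of_lt_pi hθ.1
    (lt_trans hθ.2 (half_lt_self Real.pi_pos))
  have hcθ : 0 < Real.cos θ := Real.cos_pos_of_mem_Ioo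
    ⟨by linarith [Real.pi_pos, hθ.1], hθ.2⟩
  have hcotθ : 0 < Real.cot θ := by
    rw [Real.cot_eq_cos_div_sin]; exact div_pos hcθ hsθ
  have hγ : 0 ≤ (1 / 4 - ω ^ 2) / Real.sin θ ^ 2 := by
    apply div_nonneg _ (sq_nonneg _)
    nlinarith [hω.1, hω.2]
  set γr : ℝ := (1 / 4 - ω ^ 2) / Real.sin θ ^ 2 with hγr
  have hn0 : (0:ℝ) < n := by exact_mod_cast hn
  set Ω : Set (ℝ × ℝ) := OmegaT θ with hΩdef
  have hΩopen : IsOpen Ω := by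
    have : Ω = {q : ℝ × ℝ | 0 < q.2} ∩ ({q | q.2 < π} ∩ {q | -q.2 * Real.cot θ < q.1}) := by
      ext q; simp [hΩdef, OmegaT, and_assoc]
    rw [this]
    exact (isOpen_lt continuous_const continuous_snd).inter
      ((isOpen_lt continuous_snd continuous_const).inter
        (isOpen_lt (continuous_snd.neg.mul continuous_const) continuous_fst))
  have hΩm : MeasurableSet Ω := hΩopen.measurableSet
  have hΩsub : Ω ⊆ Set.univ ×ˢ Set.Ioo 0 π := fun q hq =>
    ⟨Set.mem_univ _, hq.1, hq.2.1⟩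
  -- the functions
  set V : ℝ × ℝ → ℂ := W0 n (-p) χ with hVdef
  set V1 : ℝ × ℝ → ℂ := W1 n (-p) χ with hV1def
  set V2 : ℝ × ℝ → ℂ := W2 n (-p) χ with hV2def
  have hUW : unp = W0 n p χ := by
    funext q
    rw [hunp q]
    unfold W0 Fa Ee
    push_cast
    ring
  -- conjugation facts
  have hcU : ∀ q, (starRingEnd ℂ) (unp q) = V q := by
    intro q
    rw [hUW, hVdef]
    unfold W0
    exact conj_ree _ _ p q.1
  -- derivatives of unp
  have hdu1 : ∀ q, fderiv ℝ unp q (1, 0) = W1 n p χ q + Complex.I * p * W0 n p χ q := by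
    intro q
    rw [hUW, (w0_hasFDerivAt hχ q).fderiv]
    simp
  have hdu2 : ∀ q, fderiv ℝ unp q (0, 1) = W2 n p χ q := by
    intro q
    rw [hUW, (w0_hasFDerivAt hχ q).fderiv]
    simp
  have hcdu1 : ∀ q, (starRingEnd ℂ) (fderiv ℝ unp q (1, 0))
      = V1 q + Complex.I * (-p : ℝ) * V q := by
    intro q
    rw [hdu1 q, map_add, hV1def, hVdef]
    unfold W0 W1
    rw [conj_ree, map_mul, map_mul, Complex.conj_I, Complex.conj_ofReal, conj_ree]
    push_cast
    ring
  have hcdu2 : ∀ q, (starRingEnd ℂ) (fderiv ℝ unp q (0, 1)) = V2 q := by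
    intro q
    rw [hdu2 q, hV2def]
    unfold W2
    exact conj_ree _ _ p q.1
  -- derivatives of V and V2
  have hVdiff : Differentiable ℝ V := fun q => (w0_hasFDerivAt hχ q).differentiableAt
  have hV2diff : Differentiable ℝ V2 := fun q => (w2_hasFDerivAt hχ q).differentiableAt
  have hdV1 : ∀ q, fderiv ℝ V q (1, 0) = V1 q + Complex.I * (-p : ℝ) * V q := by
    intro q
    rw [hVdef, (w0_hasFDerivAt hχ q).fderiv]
    push_cast
    simp
    rfl
  have hdV22 : ∀ q, fderiv ℝ V2 q (0, 1) = -V q := by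
    intro q
    rw [hV2def, (w2_hasFDerivAt hχ q).fderiv]
    simp [hVdef]
  -- vanishing off Ω
  have hφ0 : ∀ q ∉ Ω, φ q = 0 := fun q hq =>
    image_eq_zero_of_notMem_tsupport (fun h => hq (hφΩ h))
  have hdφ0' : ∀ q, q ∉ tsupport φ → fderiv ℝ φ q = 0 := by
    intro q hq
    by_contra h
    exact hq (support_fderiv_subset ℝ (Function.mem_support.mpr h))
  have hdφ0 : ∀ q, q ∉ Ω → fderiv ℝ φ q = 0 := fun q hq =>
    hdφ0' q (fun h => hq (hφΩ h))
  -- continuity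
  have hφc : Continuous φ := hφ.continuous
  have hD1c : Continuous (fun q => fderiv ℝ φ q (1, 0)) := by
    exact (((hφ.fderiv_right (by simp)).continuous (n := (⊤ : ℕ∞))).clm_apply continuous_const)
  have hD2c : Continuous (fun q => fderiv ℝ φ q (0, 1)) := by
    exact (((hφ.fderiv_right (by simp)).continuous (n := (⊤ : ℕ∞))).clm_apply continuous_const)
  have hVc : Continuous V := continuous_W0 hχ
  have hV1c : Continuous V1 := continuous_W1 hχ
  have hV2c : Continuous V2 := continuous_W2 hχ
  -- integrability: products with φ-type factors
  have key_int : ∀ (ψ w : ℝ × ℝ → ℂ), Continuous ψ → Continuous w →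
      (∀ q ∉ tsupport φ, ψ q = 0) → Integrable (fun q => ψ q * w q) volume := by
    intro ψ w hψ hw h0
    apply (hψ.mul hw).integrable_of_hasCompactSupport
    apply HasCompactSupport.intro hφs
    intro q hq
    rw [Pi.mul_apply, h0 q hq, zero_mul]
  have hD10 : ∀ q ∉ Ω, fderiv ℝ φ q (1, 0) = (0 : ℂ) := fun q hq => by simp [hdφ0 q hq]
  have hD20 : ∀ q ∉ Ω, fderiv ℝ φ q (0, 1) = (0 : ℂ) := fun q hq => by simp [hdφ0 q hq]
  have hD10' : ∀ q ∉ tsupport φ, fderiv ℝ φ q (1, 0) = (0 : ℂ) := fun q hq => by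
    simp [hdφ0' q hq]
  have hD20' : ∀ q ∉ tsupport φ, fderiv ℝ φ q (0, 1) = (0 : ℂ) := fun q hq => by
    simp [hdφ0' q hq]
  have hφ0' : ∀ q ∉ tsupport φ, φ q = 0 := fun q hq => image_eq_zero_of_notMem_tsupport hq
  -- norms of V, V1 (L² on Ω)
  have hVl2 := l2_bound (continuous_Fa hχ) (hcs_Fa hχs hn) hΩm hΩsub
    (f := V) (fun q => rfl) (norm_Ee (-p))
  have hV1l2 := l2_bound (continuous_Fd hχ) (hcs_Fd hχs hχ hn) hΩm hΩsub
    (f := V1) (fun q => rfl) (norm_Ee (-p))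
  have hVsq : ∫ q in Ω, ‖V q‖ ^ 2 ≤ 1 := by
    refine le_trans hVl2.2 ?_
    rw [integral_Fa_sq hn hχsupp, hχnorm, mul_one]
    exact le_of_eq (by field_simp)
  have hV1sq : ∫ q in Ω, ‖V1 q‖ ^ 2
      ≤ ((n:ℝ) ^ 2)⁻¹ * ∫ x in Set.Ioo (1:ℝ) 2, (deriv χ x) ^ 2 := by
    refine le_trans hV1l2.2 (le_of_eq ?_)
    rw [integral_Fd_sq hn hχsupp]
    field_simp
  -- set integral to full integral conversion
  have conv0 : ∀ (f : ℝ × ℝ → ℂ), (∀ q ∉ Ω, f q = 0) → ∫ q in Ω, f q = ∫ q, f q :=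
    fun f hf => setIntegral_eq_integral_of_forall_compl_eq_zero hf
  -- integrable products
  have iD1V1 : Integrable (fun q => fderiv ℝ φ q (1, 0) * V1 q) volume :=
    key_int _ V1 hD1c hV1c hD10'
  have iD1V : Integrable (fun q => fderiv ℝ φ q (1, 0) * V q) volume :=
    key_int _ V hD1c hVc hD10'
  have iD2V2 : Integrable (fun q => fderiv ℝ φ q (0, 1) * V2 q) volume :=
    key_int _ V2 hD2c hV2c hD20'
  have iφV : Integrable (fun q => φ q * V q) volume := key_int φ V hφc hVc hφ0'
  have iφV1 : Integrable (fun q => φ q * V1 q) volume := key_int φ V1 hφc hV1c hφ0'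
  have iφdV : Integrable (fun q => φ q * fderiv ℝ V q (1, 0)) volume := by
    have h : (fun q => φ q * fderiv ℝ V q (1, 0))
        = fun q => φ q * (V1 q + Complex.I * (-p : ℝ) * V q) := funext fun q => by rw [hdV1 q]
    rw [h]
    exact key_int φ _ hφc (hV1c.add (continuous_const.mul hVc)) hφ0'
  have iφdV2 : Integrable (fun q => φ q * fderiv ℝ V2 q (0, 1)) volume := by
    have h : (fun q => φ q * fderiv ℝ V2 q (0, 1)) = fun q => φ q * (-V q) :=
      funext fun q => by rw [hdV22 q]
    rw [h]
    exact key_int φ _ hφc hVc.neg hφ0'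
  -- integration by parts
  have ibp1 : ∫ q, φ q * fderiv ℝ V q (1, 0) = - ∫ q, fderiv ℝ φ q (1, 0) * V q :=
    integral_mul_fderiv_eq_neg_fderiv_mul_of_integrable iD1V iφdV iφV
      (fun x _ => hφ.differentiable (by simp) x) (fun x _ => hVdiff x)
  have ibp2 : ∫ q, φ q * fderiv ℝ V2 q (0, 1) = - ∫ q, fderiv ℝ φ q (0, 1) * V2 q :=
    integral_mul_fderiv_eq_neg_fderiv_mul_of_integrable iD2V2 iφdV2
      (key_int φ V2 hφc hV2c hφ0') (fun x _ => hφ.differentiable (by simp) x) (fun x _ => hV2diff x)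
  have hD1V : ∫ q, fderiv ℝ φ q (1, 0) * V q
      = - (∫ q, φ q * V1 q) + Complex.I * p * ∫ q, φ q * V q := by
    have h1 : ∫ q, φ q * fderiv ℝ V q (1, 0)
        = (∫ q, φ q * V1 q) + Complex.I * (-p : ℝ) * ∫ q, φ q * V q := by
      have h : (fun q => φ q * fderiv ℝ V q (1, 0))
          = fun q => φ q * V1 q + Complex.I * (-p : ℝ) * (φ q * V q) :=
        funext fun q => by rw [hdV1 q]; ring
      rw [h, integral_add iφV1 (iφV.const_mul _), integral_const_mul]
    have h2 := ibp1
    rw [h1] at h2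
    push_cast at h2 ⊢
    linear_combination h2
  have hD2V2' : ∫ q, fderiv ℝ φ q (0, 1) * V2 q = ∫ q, φ q * V q := by
    have h1 : ∫ q, φ q * fderiv ℝ V2 q (0, 1) = - ∫ q, φ q * V q := by
      have h : (fun q => φ q * fderiv ℝ V2 q (0, 1)) = fun q => -(φ q * V q) :=
        funext fun q => by rw [hdV22 q]; ring
      rw [h, integral_neg]
    have h2 := ibp2
    rw [h1] at h2
    linear_combination h2
  -- pointwise bound for the potential term
  have hptG : ∀ q ∈ Ω, ‖((γr / (q.1 + q.2 * Real.cot θ) ^ 2 : ℝ) : ℂ) * V q‖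
      ≤ γr / (n : ℝ) ^ 2 * ‖V q‖ := by
    intro q hq
    rw [norm_mul, Complex.norm_real, Real.norm_eq_abs]
    by_cases hz : V q = 0
    · simp [hz]
    · have hFane : Fa n χ q.1 ≠ 0 := by
        intro h0
        apply hz
        rw [hVdef]
        unfold W0
        rw [h0]
        simp
      have hχne : χ (q.1 / n) ≠ 0 := by
        intro h0
        apply hFane
        unfold Fa
        rw [h0]
        ring
      have hmem : q.1 / (n : ℝ) ∈ Set.Ioo (1 : ℝ) 2 :=
        hχsupp (subset_tsupport χ (Function.mem_support.mpr hχne))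
      have hq1 : (n : ℝ) < q.1 := (one_lt_div hn0).mp hmem.1
      have hq2 : 0 ≤ q.2 * Real.cot θ := mul_nonneg hq.1.le hcotθ.le
      have hden : (n : ℝ) ≤ q.1 + q.2 * Real.cot θ := by linarith
      have habs : |γr / (q.1 + q.2 * Real.cot θ) ^ 2| = γr / (q.1 + q.2 * Real.cot θ) ^ 2 :=
        abs_of_nonneg (div_nonneg hγ (sq_nonneg _))
      rw [habs]
      have hle : γr / (q.1 + q.2 * Real.cot θ) ^ 2 ≤ γr / (n : ℝ) ^ 2 :=
        div_le_div_of_nonneg_left hγ (by positivity) (pow_le_pow_left₀ hn0.le hden 2)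
      exact mul_le_mul_of_nonneg_right hle (norm_nonneg _)
  -- measurability of the potential-term integrand
  have hGVmeas : AEStronglyMeasurable
      (fun q : ℝ × ℝ => ((γr / (q.1 + q.2 * Real.cot θ) ^ 2 : ℝ) : ℂ) * V q)
      (volume.restrict Ω) := by
    have hm : Measurable (fun q : ℝ × ℝ => γr / (q.1 + q.2 * Real.cot θ) ^ 2) :=
      measurable_const.div (((measurable_fst.add (measurable_snd.mul_const _)).pow_const 2))
    exact ((Complex.measurable_ofReal.comp hm).aestronglyMeasurable.mul
      hVc.measurable.aestronglyMeasurable).restrict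
  set GV : ℝ × ℝ → ℂ := fun q => ((γr / (q.1 + q.2 * Real.cot θ) ^ 2 : ℝ) : ℂ) * V q
    with hGVdef
  -- integrability of the potential term
  have iGterm : IntegrableOn (fun q => φ q * GV q) Ω volume := by
    apply Integrable.mono' (g := fun q => γr / (n : ℝ) ^ 2 * ‖φ q * V q‖)
    · exact ((iφV.norm).const_mul _).restrict
    · exact hφc.aestronglyMeasurable.restrict.mul hGVmeas
    · refine (ae_restrict_iff' hΩm).mpr (Filter.Eventually.of_forall fun q hq => ?_)
      rw [hGVdef]
      calc ‖φ q * (((γr / (q.1 + q.2 * Real.cot θ) ^ 2 : ℝ) : ℂ) * V q)‖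
          = ‖φ q‖ * ‖((γr / (q.1 + q.2 * Real.cot θ) ^ 2 : ℝ) : ℂ) * V q‖ := norm_mul _ _
      _ ≤ ‖φ q‖ * (γr / (n : ℝ) ^ 2 * ‖V q‖) :=
          mul_le_mul_of_nonneg_left (hptG q hq) (norm_nonneg _)
      _ = γr / (n : ℝ) ^ 2 * ‖φ q * V q‖ := by rw [norm_mul]; ring
  have hGVsq_int : Integrable (fun q => ‖GV q‖ ^ 2) (volume.restrict Ω) := by
    apply Integrable.mono' (g := fun q => (γr / (n : ℝ) ^ 2) ^ 2 * ‖V q‖ ^ 2)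
    · exact hVl2.1.const_mul _
    · have h : (fun q => ‖GV q‖ ^ 2) = fun q => ‖GV q‖ * ‖GV q‖ := funext fun q => sq (‖GV q‖)
      rw [h]
      exact hGVmeas.norm.mul hGVmeas.norm
    · refine (ae_restrict_iff' hΩm).mpr (Filter.Eventually.of_forall fun q hq => ?_)
      show ‖‖GV q‖ ^ 2‖ ≤ (γr / (n : ℝ) ^ 2) ^ 2 * ‖V q‖ ^ 2
      rw [Real.norm_eq_abs, abs_of_nonneg (sq_nonneg _), ← mul_pow]
      exact pow_le_pow_left₀ (norm_nonneg _) (by rw [hGVdef]; exact hptG q hq) 2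
  have hGVsq_le : ∫ q in Ω, ‖GV q‖ ^ 2 ≤ (γr / (n : ℝ) ^ 2) ^ 2 := by
    calc ∫ q in Ω, ‖GV q‖ ^ 2 ≤ ∫ q in Ω, (γr / (n : ℝ) ^ 2) ^ 2 * ‖V q‖ ^ 2 := by
          refine integral_mono_ae hGVsq_int (hVl2.1.const_mul _)
            ((ae_restrict_iff' hΩm).mpr (Filter.Eventually.of_forall fun q hq => ?_))
          show ‖GV q‖ ^ 2 ≤ (γr / (n : ℝ) ^ 2) ^ 2 * ‖V q‖ ^ 2
          rw [← mul_pow]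
          exact pow_le_pow_left₀ (norm_nonneg _) (by rw [hGVdef]; exact hptG q hq) 2
    _ = (γr / (n : ℝ) ^ 2) ^ 2 * ∫ q in Ω, ‖V q‖ ^ 2 := integral_const_mul _ _
    _ ≤ (γr / (n : ℝ) ^ 2) ^ 2 * 1 := mul_le_mul_of_nonneg_left hVsq (sq_nonneg _)
    _ = (γr / (n : ℝ) ^ 2) ^ 2 := mul_one _
  -- split the main integral
  have hBIGsplit : (∫ q in Ω,
        (fderiv ℝ φ q (1, 0) * (starRingEnd ℂ) (fderiv ℝ unp q (1, 0))
          + fderiv ℝ φ q (0, 1) * (starRingEnd ℂ) (fderiv ℝ unp q (0, 1))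
          - ((γr / (q.1 + q.2 * Real.cot θ) ^ 2 : ℝ) : ℂ) * (φ q * (starRingEnd ℂ) (unp q))))
      = (∫ q, fderiv ℝ φ q (1, 0) * V1 q)
        + Complex.I * (-p : ℝ) * (∫ q, fderiv ℝ φ q (1, 0) * V q)
        + (∫ q, fderiv ℝ φ q (0, 1) * V2 q)
        - ∫ q in Ω, φ q * GV q := by
    have hcongr : ∀ q : ℝ × ℝ,
        (fderiv ℝ φ q (1, 0) * (starRingEnd ℂ) (fderiv ℝ unp q (1, 0))
          + fderiv ℝ φ q (0, 1) * (starRingEnd ℂ) (fderiv ℝ unp q (0, 1))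
          - ((γr / (q.1 + q.2 * Real.cot θ) ^ 2 : ℝ) : ℂ) * (φ q * (starRingEnd ℂ) (unp q)))
        = (fderiv ℝ φ q (1, 0) * V1 q
            + Complex.I * (-p : ℝ) * (fderiv ℝ φ q (1, 0) * V q)
            + fderiv ℝ φ q (0, 1) * V2 q)
          - φ q * GV q := by
      intro q
      rw [hcdu1 q, hcdu2 q, hcU q, hGVdef]
      ring
    have iA : Integrable (fun q => fderiv ℝ φ q (1, 0) * V1 q
        + Complex.I * (-p : ℝ) * (fderiv ℝ φ q (1, 0) * V q)) volume := by
      exact iD1V1.add (iD1V.const_mul _)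
    have iB : Integrable (fun q => (fderiv ℝ φ q (1, 0) * V1 q
        + Complex.I * (-p : ℝ) * (fderiv ℝ φ q (1, 0) * V q))
        + fderiv ℝ φ q (0, 1) * V2 q) volume := by
      exact iA.add iD2V2
    rw [setIntegral_congr_fun hΩm (fun q _ => hcongr q)]
    rw [integral_sub iB.integrableOn iGterm]
    congr 1
    rw [integral_add iA.integrableOn (iD2V2.integrableOn),
      integral_add (iD1V1.integrableOn) ((iD1V.const_mul _).integrableOn)]
    rw [conv0 _ (fun q hq => by rw [hD10 q hq, zero_mul]),
      conv0 _ (fun q hq => by simp [hD10 q hq]),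
      conv0 _ (fun q hq => by rw [hD20 q hq, zero_mul]),
      integral_const_mul]
  have hsecond : ∫ q in Ω, φ q * (starRingEnd ℂ) (unp q) = ∫ q, φ q * V q := by
    rw [setIntegral_congr_fun hΩm (fun q _ => by rw [hcU q])]
    exact conv0 _ (fun q hq => by rw [hφ0 q hq, zero_mul])
  -- the exact algebraic identity
  have hXeq : (∫ q in Ω,
        (fderiv ℝ φ q (1, 0) * (starRingEnd ℂ) (fderiv ℝ unp q (1, 0))
          + fderiv ℝ φ q (0, 1) * (starRingEnd ℂ) (fderiv ℝ unp q (0, 1))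
          - ((γr / (q.1 + q.2 * Real.cot θ) ^ 2 : ℝ) : ℂ) * (φ q * (starRingEnd ℂ) (unp q))))
      - ((1 + p ^ 2 : ℝ) : ℂ) * ∫ q in Ω, φ q * (starRingEnd ℂ) (unp q)
      = (∫ q, fderiv ℝ φ q (1, 0) * V1 q)
        + Complex.I * p * (∫ q, φ q * V1 q)
        - ∫ q in Ω, φ q * GV q := by
    rw [hBIGsplit, hsecond, hD1V, hD2V2']
    push_cast
    linear_combination (-(p:ℂ) ^ 2 * ∫ q, φ q * V q) * Complex.I_sq
  rw [hXeq]
  -- square-integrability of φ and its partials on Ω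
  have mk_int : ∀ (ψ : ℝ × ℝ → ℂ), Continuous ψ → (∀ q ∉ tsupport φ, ψ q = 0) →
      IntegrableOn (fun q => ‖ψ q‖ ^ 2) Ω volume := by
    intro ψ hψ h0
    apply Integrable.integrableOn
    apply ((hψ.norm.pow 2).integrable_of_hasCompactSupport)
    apply HasCompactSupport.intro hφs
    intro q hq
    simp [h0 q hq]
  have hφsq_int := mk_int φ hφc hφ0'
  have hD1sq_int := mk_int _ hD1c hD10'
  have hD2sq_int := mk_int _ hD2c hD20'
  set Sφ := Real.sqrt (∫ q in Ω, ‖φ q‖ ^ 2) with hSφ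
  set Sg := Real.sqrt (∫ q in Ω, (‖fderiv ℝ φ q (1, 0)‖ ^ 2 + ‖fderiv ℝ φ q (0, 1)‖ ^ 2))
    with hSg
  set Sc := Real.sqrt (∫ x in Set.Ioo (1 : ℝ) 2, (deriv χ x) ^ 2) with hSc
  have hSV1 : Real.sqrt (∫ q in Ω, ‖V1 q‖ ^ 2) ≤ (n : ℝ)⁻¹ * Sc := by
    refine le_trans (Real.sqrt_le_sqrt hV1sq) (le_of_eq ?_)
    rw [Real.sqrt_mul (by positivity), Real.sqrt_inv, Real.sqrt_sq hn0.le, hSc]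
  -- bound 1
  have hb1 : ‖∫ q, fderiv ℝ φ q (1, 0) * V1 q‖ ≤ Sg * ((n : ℝ)⁻¹ * Sc) := by
    rw [← conv0 _ (fun q hq => by rw [hD10 q hq, zero_mul])]
    refine le_trans (cs_bound (hD1c.aestronglyMeasurable.restrict)
      (hV1c.aestronglyMeasurable.restrict) hD1sq_int hV1l2.1) ?_
    refine mul_le_mul ?_ hSV1 (Real.sqrt_nonneg _) (Real.sqrt_nonneg _)
    refine Real.sqrt_le_sqrt (integral_mono hD1sq_int (hD1sq_int.add hD2sq_int) ?_)
    intro q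
    exact le_add_of_nonneg_right (sq_nonneg _)
  -- bound 2
  have hb2 : ‖∫ q, φ q * V1 q‖ ≤ Sφ * ((n : ℝ)⁻¹ * Sc) := by
    rw [← conv0 _ (fun q hq => by rw [hφ0 q hq, zero_mul])]
    refine le_trans (cs_bound (hφc.aestronglyMeasurable.restrict)
      (hV1c.aestronglyMeasurable.restrict) hφsq_int hV1l2.1) ?_
    exact mul_le_mul le_rfl hSV1 (Real.sqrt_nonneg _) (Real.sqrt_nonneg _)
  -- bound 3
  have hb3 : ‖∫ q in Ω, φ q * GV q‖ ≤ Sφ * (γr / (n : ℝ) ^ 2) := by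
    refine le_trans (cs_bound (hφc.aestronglyMeasurable.restrict) hGVmeas hφsq_int hGVsq_int) ?_
    refine mul_le_mul le_rfl ?_ (Real.sqrt_nonneg _) (Real.sqrt_nonneg _)
    refine le_trans (Real.sqrt_le_sqrt hGVsq_le) (le_of_eq ?_)
    exact Real.sqrt_sq (div_nonneg hγ (by positivity))
  -- put everything together
  have hnorm3 : ‖(∫ q, fderiv ℝ φ q (1, 0) * V1 q) + Complex.I * p * (∫ q, φ q * V1 q)
      - ∫ q in Ω, φ q * GV q‖
      ≤ ‖∫ q, fderiv ℝ φ q (1, 0) * V1 q‖ + p * ‖∫ q, φ q * V1 q‖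
        + ‖∫ q in Ω, φ q * GV q‖ := by
    refine le_trans (norm_sub_le _ _) ?_
    refine add_le_add_left (le_trans (norm_add_le _ _) ?_) _
    refine add_le_add_right (le_of_eq ?_) _
    rw [norm_mul, norm_mul, Complex.norm_I, one_mul, Complex.norm_real, Real.norm_eq_abs,
      abs_of_pos hp]
  refine le_trans hnorm3 ?_
  have hpb2 : p * ‖∫ q, φ q * V1 q‖ ≤ p * (Sφ * ((n : ℝ)⁻¹ * Sc)) :=
    mul_le_mul_of_nonneg_left hb2 hp.le
  have hexpand : γr / (n : ℝ) ^ 2 * Sφ + (p * Sφ + Sg) * (n : ℝ)⁻¹ * Sc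
      = Sg * ((n : ℝ)⁻¹ * Sc) + p * (Sφ * ((n : ℝ)⁻¹ * Sc)) + Sφ * (γr / (n : ℝ) ^ 2) := by
    ring
  rw [hexpand]
  linarith [hb1, hpb2, hb3]
end
end

section
/- Let θ ∈ (0, π/2), ω ∈ (0, 1/2], and γ = (1/4 − ω²)/sin²θ. For f ∈ C_0^∞((1, +∞); ℂ), define u : Ω_θ → ℂ by u(s,t) = √(2/π) f(s) sin t (extended by zero for s ≤ 1). Then ∫_{Ω_θ} |u|² ds dt = ∫_1^{+∞} |f|² dx, and ∫_{Ω_θ} ( |∂_s u|² + |∂_t u|² − γ |u|²/(s + t cot θ)² ) ds dt ≤ ∫_1^{+∞} |f'(x)|² dx − γ ∫_1^{+∞} |f(x)|²/(x + π cot θ)² dx + ∫_1^{+∞} |f(x)|² dx. Consequently, if ∫_1^{+∞}(|f'|² − γ|f|²/(x+π cot θ)²) dx < −E ∫_1^{+∞}|f|² dx for some E > 0, then h_{ω,θ}[u] < (1−E) ‖u‖²_{L²(Ω_θ)}. (Transfer mechanism behind the lower bound on the eigenvalue counting function.) -/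
set_option maxHeartbeats 4000000

open Real MeasureTheory

noncomputable section

theorem fderiv_eval_aux (f : ℝ → ℂ) (hf : ContDiff ℝ (⊤ : ℕ∞) f) (c : ℝ) (q : ℝ × ℝ) :
    fderiv ℝ (fun p : ℝ × ℝ => ((c * Real.sin p.2 : ℝ) : ℂ) * f p.1) q (1, 0)
      = ((c * Real.sin q.2 : ℝ) : ℂ) * deriv f q.1 ∧
    fderiv ℝ (fun p : ℝ × ℝ => ((c * Real.sin p.2 : ℝ) : ℂ) * f p.1) q (0, 1)
      = ((c * Real.cos q.2 : ℝ) : ℂ) * f q.1 := by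
  have h1 : HasFDerivAt (fun p : ℝ × ℝ => ((c * Real.sin p.2 : ℝ) : ℂ))
      ((ContinuousLinearMap.snd ℝ ℝ ℝ).smulRight ((c * Real.cos q.2 : ℝ) : ℂ)) q := by
    have hg : HasDerivAt (fun t : ℝ => ((c * Real.sin t : ℝ) : ℂ))
        ((c * Real.cos q.2 : ℝ) : ℂ) q.2 := by
      have := ((Real.hasDerivAt_sin q.2).const_mul c).ofReal_comp
      simpa using this
    have := hg.hasFDerivAt.comp q (hasFDerivAt_snd (𝕜 := ℝ) (E := ℝ) (F := ℝ))
    exact this.congr_fderiv (ContinuousLinearMap.ext fun p => by simp)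
  have h2 : HasFDerivAt (fun p : ℝ × ℝ => f p.1)
      ((ContinuousLinearMap.fst ℝ ℝ ℝ).smulRight (deriv f q.1)) q := by
    have hg : HasDerivAt f (deriv f q.1) q.1 := (hf.differentiable (by simp) q.1).hasDerivAt
    have := hg.hasFDerivAt.comp q (hasFDerivAt_fst (𝕜 := ℝ) (E := ℝ) (F := ℝ))
    exact this.congr_fderiv (ContinuousLinearMap.ext fun p => by simp)
  have h := (h1.mul h2).fderiv
  rw [show (fun p : ℝ × ℝ => ((c * Real.sin p.2 : ℝ) : ℂ) * f p.1)
      = ((fun p : ℝ × ℝ => ((c * Real.sin p.2 : ℝ) : ℂ)) * fun p => f p.1) from rfl, h]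
  constructor <;> simp [mul_comm]

/-- Transfer mechanism behind the lower bound on the counting function:
for `f` supported in `(1,∞)` and `u(s,t) = √(2/π) f(s) sin t`, the L² norms
agree, the form `h_{ω,θ}[u]` is dominated by the one-dimensional energy, and a
negative one-dimensional Rayleigh quotient produces `h_{ω,θ}[u] < (1-E)‖u‖²`.
Here `γ = (1/4 − ω²)/sin²θ`. -/
theorem transfer_mechanism (θ ω : ℝ)
    (hθ : θ ∈ Set.Ioo 0 (π / 2)) (hω : ω ∈ Set.Ioc 0 (1 / 2)) :
    ∀ f : ℝ → ℂ,
      ContDiff ℝ (⊤ : ℕ∞) f → HasCompactSupport f → tsupport f ⊆ Set.Ioi 1 →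
      ∀ u : ℝ × ℝ → ℂ,
      (∀ q : ℝ × ℝ, u q = ((Real.sqrt (2 / π) * Real.sin q.2 : ℝ) : ℂ) * f q.1) →
      ((∫ q in OmegaT θ, ‖u q‖ ^ 2) = ∫ x in Set.Ioi (1 : ℝ), ‖f x‖ ^ 2) ∧
      ((∫ q in OmegaT θ, (‖fderiv ℝ u q (1, 0)‖ ^ 2 + ‖fderiv ℝ u q (0, 1)‖ ^ 2
            - (1 / 4 - ω ^ 2) / Real.sin θ ^ 2 * ‖u q‖ ^ 2
                / (q.1 + q.2 * Real.cot θ) ^ 2))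
        ≤ (∫ x in Set.Ioi (1 : ℝ), ‖deriv f x‖ ^ 2)
          - (1 / 4 - ω ^ 2) / Real.sin θ ^ 2
              * (∫ x in Set.Ioi (1 : ℝ), ‖f x‖ ^ 2 / (x + π * Real.cot θ) ^ 2)
          + ∫ x in Set.Ioi (1 : ℝ), ‖f x‖ ^ 2) ∧
      (∀ E > (0 : ℝ),
        (∫ x in Set.Ioi (1 : ℝ), (‖deriv f x‖ ^ 2
            - (1 / 4 - ω ^ 2) / Real.sin θ ^ 2 * ‖f x‖ ^ 2
                / (x + π * Real.cot θ) ^ 2))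
          < -E * ∫ x in Set.Ioi (1 : ℝ), ‖f x‖ ^ 2 →
        (∫ q in OmegaT θ, (‖fderiv ℝ u q (1, 0)‖ ^ 2 + ‖fderiv ℝ u q (0, 1)‖ ^ 2
            - (1 / 4 - ω ^ 2) / Real.sin θ ^ 2 * ‖u q‖ ^ 2
                / (q.1 + q.2 * Real.cot θ) ^ 2))
          < (1 - E) * ∫ q in OmegaT θ, ‖u q‖ ^ 2) := by
  intro f hf hcs hts u hu
  have hπ : (0 : ℝ) < π := Real.pi_pos
  obtain ⟨hθ1, hθ2⟩ := hθ
  have hsθ : 0 < Real.sin θ := Real.sin_pos_of_pos_of_lt_pi hθ1 (by linarith)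
  have hcθ : 0 < Real.cos θ := Real.cos_pos_of_mem_Ioo ⟨by linarith, hθ2⟩
  have hcot : 0 < Real.cot θ := by rw [Real.cot_eq_cos_div_sin]; positivity
  set c := Real.sqrt (2 / π) with hcdef
  set γ := (1 / 4 - ω ^ 2) / Real.sin θ ^ 2 with hγdef
  have hγ : 0 ≤ γ := by
    apply div_nonneg _ (sq_nonneg _)
    nlinarith [hω.1, hω.2]
  have hc2 : c ^ 2 = 2 / π := Real.sq_sqrt (by positivity)
  have hufun : u = fun p : ℝ × ℝ => ((c * Real.sin p.2 : ℝ) : ℂ) * f p.1 := funext hu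
  set B := Set.Ioi (1 : ℝ) ×ˢ Set.Ioo (0 : ℝ) π with hBdef
  have hB : MeasurableSet B := measurableSet_Ioi.prod measurableSet_Ioo
  have hΩmeas : MeasurableSet (OmegaT θ) := by
    have : OmegaT θ = {p : ℝ × ℝ | 0 < p.2} ∩
        ({p : ℝ × ℝ | p.2 < π} ∩ {p : ℝ × ℝ | -p.2 * Real.cot θ < p.1}) := by
      ext p; simp [OmegaT, and_assoc]
    rw [this]
    exact (measurableSet_lt measurable_const measurable_snd).inter
      ((measurableSet_lt measurable_snd measurable_const).inter
        (measurableSet_lt (measurable_snd.neg.mul measurable_const) measurable_fst))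
  have hBsub : B ⊆ OmegaT θ := by
    rintro ⟨s, t⟩ ⟨hs, ht0, htπ⟩
    have h1 : (1 : ℝ) < s := hs
    have : 0 < t * Real.cot θ := mul_pos ht0 hcot
    exact ⟨ht0, htπ, by simp only; nlinarith⟩
  -- vanishing off the support
  have hvan : ∀ q : ℝ × ℝ, q.1 ∉ tsupport f → u q = 0 ∧ fderiv ℝ u q = 0 := by
    intro q hq
    have hopen : IsOpen {p : ℝ × ℝ | p.1 ∉ tsupport f} :=
      (isClosed_tsupport f).isOpen_compl.preimage continuous_fst
    have hnb : u =ᶠ[nhds q] fun _ => (0 : ℂ) := by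
      filter_upwards [hopen.mem_nhds hq] with p hp
      rw [hu p, image_eq_zero_of_notMem_tsupport hp, mul_zero]
    refine ⟨hnb.self_of_nhds, ?_⟩
    rw [hnb.fderiv_eq, fderiv_const_apply]
  have hoffB : ∀ q ∈ OmegaT θ \ B, q.1 ∉ tsupport f := by
    rintro ⟨s, t⟩ ⟨⟨ht0, htπ, _⟩, hnB⟩ hsup
    have : (1 : ℝ) < s := hts hsup
    exact hnB ⟨this, ht0, htπ⟩
  -- pointwise formulas
  have hu2 : ∀ q : ℝ × ℝ, ‖u q‖ ^ 2 = ‖f q.1‖ ^ 2 * (c ^ 2 * Real.sin q.2 ^ 2) := by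
    intro q
    rw [hu q, norm_mul, mul_pow, Complex.norm_real, Real.norm_eq_abs, sq_abs, mul_pow]
    ring
  have hd1 : ∀ q : ℝ × ℝ,
      ‖fderiv ℝ u q (1, 0)‖ ^ 2 = ‖deriv f q.1‖ ^ 2 * (c ^ 2 * Real.sin q.2 ^ 2) := by
    intro q
    rw [hufun, (fderiv_eval_aux f hf c q).1, norm_mul, mul_pow, Complex.norm_real,
      Real.norm_eq_abs, sq_abs, mul_pow]
    ring
  have hd2 : ∀ q : ℝ × ℝ,
      ‖fderiv ℝ u q (0, 1)‖ ^ 2 = ‖f q.1‖ ^ 2 * (c ^ 2 * Real.cos q.2 ^ 2) := by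
    intro q
    rw [hufun, (fderiv_eval_aux f hf c q).2, norm_mul, mul_pow, Complex.norm_real,
      Real.norm_eq_abs, sq_abs, mul_pow]
    ring
  -- one-dimensional integrals in t
  have hIsin : (∫ t in Set.Ioo (0 : ℝ) π, c ^ 2 * Real.sin t ^ 2) = 1 := by
    rw [← integral_Ioc_eq_integral_Ioo, ← intervalIntegral.integral_of_le hπ.le,
      intervalIntegral.integral_const_mul, integral_sin_sq, hc2]
    simp
  have hIcos : (∫ t in Set.Ioo (0 : ℝ) π, c ^ 2 * Real.cos t ^ 2) = 1 := by
    rw [← integral_Ioc_eq_integral_Ioo, ← intervalIntegral.integral_of_le hπ.le,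
      intervalIntegral.integral_const_mul, integral_cos_sq, hc2]
    simp
  -- integrability in s
  have hfc : Continuous f := hf.continuous
  have hint_f : Integrable (fun x => ‖f x‖ ^ 2) := by
    refine ((hfc.norm).pow 2).integrable_of_hasCompactSupport ?_
    exact hcs.comp_left (g := fun z : ℂ => ‖z‖ ^ 2) (by simp)
  have hint_df : Integrable (fun x => ‖deriv f x‖ ^ 2) := by
    refine (((hf.continuous_deriv (by simp)).norm).pow 2).integrable_of_hasCompactSupport ?_
    have hcsd := HasCompactSupport.deriv (𝕜 := ℝ) hcs
    exact hcsd.comp_left (g := fun z : ℂ => ‖z‖ ^ 2) (by simp)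
  have hint3 : IntegrableOn (fun x => ‖f x‖ ^ 2 / (x + π * Real.cot θ) ^ 2)
      (Set.Ioi (1 : ℝ)) := by
    refine Integrable.mono' hint_f.integrableOn ?_ ?_
    · exact ((((hfc.norm).pow 2).measurable).div
        (((continuous_id.add continuous_const).pow 2).measurable)).aestronglyMeasurable
    · filter_upwards [ae_restrict_mem measurableSet_Ioi] with x hx
      have hx1 : (1 : ℝ) < x := hx
      have hpc : 0 < π * Real.cot θ := mul_pos hπ hcot
      have h1 : 1 ≤ (x + π * Real.cot θ) ^ 2 := by nlinarith
      rw [Real.norm_eq_abs, abs_of_nonneg (by positivity)]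
      exact div_le_self (by positivity) h1
  -- product tools
  have prod_int : ∀ φ ψ : ℝ → ℝ, IntegrableOn φ (Set.Ioi 1) →
      IntegrableOn ψ (Set.Ioo 0 π) → IntegrableOn (fun q : ℝ × ℝ => φ q.1 * ψ q.2) B := by
    intro φ ψ h1 h2
    rw [IntegrableOn, hBdef, Measure.volume_eq_prod ℝ ℝ, ← Measure.prod_restrict]
    exact h1.mul_prod h2
  have prod_eval : ∀ φ ψ : ℝ → ℝ, (∫ q in B, φ q.1 * ψ q.2)
      = (∫ x in Set.Ioi (1 : ℝ), φ x) * ∫ t in Set.Ioo (0 : ℝ) π, ψ t := by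
    intro φ ψ
    rw [hBdef, Measure.volume_eq_prod ℝ ℝ]
    exact setIntegral_prod_mul φ ψ _ _
  have hψsin : IntegrableOn (fun t => c ^ 2 * Real.sin t ^ 2) (Set.Ioo (0 : ℝ) π) :=
    ((continuous_const.mul (Real.continuous_sin.pow 2)).integrableOn_Icc).mono_set
      Set.Ioo_subset_Icc_self
  have hψcos : IntegrableOn (fun t => c ^ 2 * Real.cos t ^ 2) (Set.Ioo (0 : ℝ) π) :=
    ((continuous_const.mul (Real.continuous_cos.pow 2)).integrableOn_Icc).mono_set
      Set.Ioo_subset_Icc_self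
  -- Part 1
  have part1 : (∫ q in OmegaT θ, ‖u q‖ ^ 2) = ∫ x in Set.Ioi (1 : ℝ), ‖f x‖ ^ 2 := by
    have hz : ∀ q ∈ OmegaT θ \ B, ‖u q‖ ^ 2 = 0 := by
      intro q hq
      rw [(hvan q (hoffB q hq)).1]
      simp
    calc (∫ q in OmegaT θ, ‖u q‖ ^ 2) = ∫ q in B, ‖u q‖ ^ 2 :=
          setIntegral_eq_of_subset_of_forall_diff_eq_zero hΩmeas hBsub hz
      _ = ∫ q in B, ‖f q.1‖ ^ 2 * (c ^ 2 * Real.sin q.2 ^ 2) :=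
          integral_congr_ae (Filter.Eventually.of_forall fun q => hu2 q)
      _ = (∫ x in Set.Ioi (1 : ℝ), ‖f x‖ ^ 2) * ∫ t in Set.Ioo (0 : ℝ) π,
            c ^ 2 * Real.sin t ^ 2 :=
          prod_eval (fun x => ‖f x‖ ^ 2) (fun t => c ^ 2 * Real.sin t ^ 2)
      _ = ∫ x in Set.Ioi (1 : ℝ), ‖f x‖ ^ 2 := by rw [hIsin, mul_one]
  -- Part 2
  have hG1 : IntegrableOn (fun q : ℝ × ℝ => ‖deriv f q.1‖ ^ 2 * (c ^ 2 * Real.sin q.2 ^ 2)) B :=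
    prod_int (fun x => ‖deriv f x‖ ^ 2) (fun t => c ^ 2 * Real.sin t ^ 2) hint_df.integrableOn hψsin
  have hG2 : IntegrableOn (fun q : ℝ × ℝ => ‖f q.1‖ ^ 2 * (c ^ 2 * Real.cos q.2 ^ 2)) B :=
    prod_int (fun x => ‖f x‖ ^ 2) (fun t => c ^ 2 * Real.cos t ^ 2) hint_f.integrableOn hψcos
  have hF3' : IntegrableOn (fun q : ℝ × ℝ =>
      (γ * (‖f q.1‖ ^ 2 / (q.1 + π * Real.cot θ) ^ 2)) * (c ^ 2 * Real.sin q.2 ^ 2)) B :=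
    prod_int (fun x => γ * (‖f x‖ ^ 2 / (x + π * Real.cot θ) ^ 2)) (fun t => c ^ 2 * Real.sin t ^ 2) (hint3.const_mul γ) hψsin
  have hF3 : IntegrableOn (fun q : ℝ × ℝ =>
      γ * (‖f q.1‖ ^ 2 * (c ^ 2 * Real.sin q.2 ^ 2)) / (q.1 + q.2 * Real.cot θ) ^ 2) B := by
    refine Integrable.mono' (prod_int (fun x => γ * ‖f x‖ ^ 2 * c ^ 2) (fun _ => 1)
      ((hint_f.integrableOn.const_mul γ).mul_const _) (integrableOn_const
        measure_Ioo_lt_top.ne)) ?_ ?_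
    · apply Measurable.aestronglyMeasurable
      apply Measurable.div
      · exact (continuous_const.mul (((hfc.comp continuous_fst).norm.pow 2).mul
          (continuous_const.mul ((Real.continuous_sin.comp continuous_snd).pow 2)))).measurable
      · exact ((continuous_fst.add (continuous_snd.mul continuous_const)).pow 2).measurable
    · filter_upwards [ae_restrict_mem hB] with q hq
      obtain ⟨hq1, hq2, hq3⟩ : (1 : ℝ) < q.1 ∧ 0 < q.2 ∧ q.2 < π := ⟨hq.1, hq.2.1, hq.2.2⟩
      have hd : 1 < q.1 + q.2 * Real.cot θ := by nlinarith [mul_pos hq2 hcot]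
      have hd2 : 1 ≤ (q.1 + q.2 * Real.cot θ) ^ 2 := by nlinarith
      have ha : (0 : ℝ) ≤ ‖f q.1‖ ^ 2 := sq_nonneg _
      have hs2 : Real.sin q.2 ^ 2 ≤ 1 := Real.sin_sq_le_one q.2
      have hnum : 0 ≤ γ * (‖f q.1‖ ^ 2 * (c ^ 2 * Real.sin q.2 ^ 2)) := by positivity
      rw [Real.norm_eq_abs, abs_of_nonneg (div_nonneg hnum (by positivity))]
      calc γ * (‖f q.1‖ ^ 2 * (c ^ 2 * Real.sin q.2 ^ 2)) / (q.1 + q.2 * Real.cot θ) ^ 2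
          ≤ γ * (‖f q.1‖ ^ 2 * (c ^ 2 * Real.sin q.2 ^ 2)) := div_le_self hnum hd2
        _ = (γ * ‖f q.1‖ ^ 2 * c ^ 2) * Real.sin q.2 ^ 2 := by ring
        _ ≤ (γ * ‖f q.1‖ ^ 2 * c ^ 2) * 1 :=
            mul_le_mul_of_nonneg_left hs2 (by positivity)
        _ = γ * ‖f q.1‖ ^ 2 * c ^ 2 * 1 := by ring
  have part2 : (∫ q in OmegaT θ, (‖fderiv ℝ u q (1, 0)‖ ^ 2 + ‖fderiv ℝ u q (0, 1)‖ ^ 2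
        - γ * ‖u q‖ ^ 2 / (q.1 + q.2 * Real.cot θ) ^ 2))
      ≤ (∫ x in Set.Ioi (1 : ℝ), ‖deriv f x‖ ^ 2)
        - γ * (∫ x in Set.Ioi (1 : ℝ), ‖f x‖ ^ 2 / (x + π * Real.cot θ) ^ 2)
        + ∫ x in Set.Ioi (1 : ℝ), ‖f x‖ ^ 2 := by
    have hz : ∀ q ∈ OmegaT θ \ B, (‖fderiv ℝ u q (1, 0)‖ ^ 2 + ‖fderiv ℝ u q (0, 1)‖ ^ 2
        - γ * ‖u q‖ ^ 2 / (q.1 + q.2 * Real.cot θ) ^ 2) = 0 := by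
      intro q hq
      obtain ⟨h0, hD⟩ := hvan q (hoffB q hq)
      rw [h0, hD]
      simp
    calc (∫ q in OmegaT θ, (‖fderiv ℝ u q (1, 0)‖ ^ 2 + ‖fderiv ℝ u q (0, 1)‖ ^ 2
            - γ * ‖u q‖ ^ 2 / (q.1 + q.2 * Real.cot θ) ^ 2))
        = ∫ q in B, (‖fderiv ℝ u q (1, 0)‖ ^ 2 + ‖fderiv ℝ u q (0, 1)‖ ^ 2
            - γ * ‖u q‖ ^ 2 / (q.1 + q.2 * Real.cot θ) ^ 2) :=
          setIntegral_eq_of_subset_of_forall_diff_eq_zero hΩmeas hBsub hz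
      _ = ∫ q in B, (‖deriv f q.1‖ ^ 2 * (c ^ 2 * Real.sin q.2 ^ 2)
            + ‖f q.1‖ ^ 2 * (c ^ 2 * Real.cos q.2 ^ 2)
            - γ * (‖f q.1‖ ^ 2 * (c ^ 2 * Real.sin q.2 ^ 2))
                / (q.1 + q.2 * Real.cot θ) ^ 2) := by
          refine integral_congr_ae (Filter.Eventually.of_forall fun q => ?_)
          simp only [hd1 q, hd2 q, hu2 q]
      _ ≤ ∫ q in B, (‖deriv f q.1‖ ^ 2 * (c ^ 2 * Real.sin q.2 ^ 2)
            + ‖f q.1‖ ^ 2 * (c ^ 2 * Real.cos q.2 ^ 2)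
            - (γ * (‖f q.1‖ ^ 2 / (q.1 + π * Real.cot θ) ^ 2))
                * (c ^ 2 * Real.sin q.2 ^ 2)) := by
          refine setIntegral_mono_on ((hG1.add hG2).sub hF3) ((hG1.add hG2).sub hF3') hB ?_
          intro q hq
          obtain ⟨hq1, hq2, hq3⟩ : (1 : ℝ) < q.1 ∧ 0 < q.2 ∧ q.2 < π := ⟨hq.1, hq.2.1, hq.2.2⟩
          have hd0 : 0 < q.1 + q.2 * Real.cot θ := by nlinarith [mul_pos hq2 hcot]
          have hdD : q.1 + q.2 * Real.cot θ ≤ q.1 + π * Real.cot θ := by nlinarith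
          have key : (γ * (‖f q.1‖ ^ 2 / (q.1 + π * Real.cot θ) ^ 2))
                * (c ^ 2 * Real.sin q.2 ^ 2)
              ≤ γ * (‖f q.1‖ ^ 2 * (c ^ 2 * Real.sin q.2 ^ 2))
                / (q.1 + q.2 * Real.cot θ) ^ 2 := by
            have e1 : (γ * (‖f q.1‖ ^ 2 / (q.1 + π * Real.cot θ) ^ 2))
                * (c ^ 2 * Real.sin q.2 ^ 2)
                = γ * ‖f q.1‖ ^ 2 * (c ^ 2 * Real.sin q.2 ^ 2)
                  / (q.1 + π * Real.cot θ) ^ 2 := by ring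
            have e2 : γ * (‖f q.1‖ ^ 2 * (c ^ 2 * Real.sin q.2 ^ 2))
                / (q.1 + q.2 * Real.cot θ) ^ 2
                = γ * ‖f q.1‖ ^ 2 * (c ^ 2 * Real.sin q.2 ^ 2)
                  / (q.1 + q.2 * Real.cot θ) ^ 2 := by ring
            rw [e1, e2]
            have hnn : (0:ℝ) ≤ γ * ‖f q.1‖ ^ 2 * (c ^ 2 * Real.sin q.2 ^ 2) :=
              mul_nonneg (mul_nonneg hγ (sq_nonneg _)) (by positivity)
            exact div_le_div_of_nonneg_left hnn (by positivity)
              (pow_le_pow_left₀ hd0.le hdD 2) |>.trans_eq rfl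
          linarith
      _ = (∫ q in B, ‖deriv f q.1‖ ^ 2 * (c ^ 2 * Real.sin q.2 ^ 2))
            + (∫ q in B, ‖f q.1‖ ^ 2 * (c ^ 2 * Real.cos q.2 ^ 2))
            - ∫ q in B, (γ * (‖f q.1‖ ^ 2 / (q.1 + π * Real.cot θ) ^ 2))
                * (c ^ 2 * Real.sin q.2 ^ 2) := by
          have hsum : IntegrableOn (fun q : ℝ × ℝ =>
              ‖deriv f q.1‖ ^ 2 * (c ^ 2 * Real.sin q.2 ^ 2)
                + ‖f q.1‖ ^ 2 * (c ^ 2 * Real.cos q.2 ^ 2)) B := hG1.add hG2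
          rw [integral_sub hsum hF3', integral_add hG1 hG2]
      _ = (∫ x in Set.Ioi (1 : ℝ), ‖deriv f x‖ ^ 2)
            - γ * (∫ x in Set.Ioi (1 : ℝ), ‖f x‖ ^ 2 / (x + π * Real.cot θ) ^ 2)
            + ∫ x in Set.Ioi (1 : ℝ), ‖f x‖ ^ 2 := by
          rw [prod_eval (fun x => ‖deriv f x‖ ^ 2) (fun t => c ^ 2 * Real.sin t ^ 2),
            prod_eval (fun x => ‖f x‖ ^ 2) (fun t => c ^ 2 * Real.cos t ^ 2),
            prod_eval (fun x => γ * (‖f x‖ ^ 2 / (x + π * Real.cot θ) ^ 2))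
              (fun t => c ^ 2 * Real.sin t ^ 2),
            hIsin, hIcos, integral_const_mul]
          ring
  refine ⟨part1, part2, ?_⟩
  -- Part 3
  intro E hE hlt
  have hint3γ : IntegrableOn (fun x => γ * ‖f x‖ ^ 2 / (x + π * Real.cot θ) ^ 2)
      (Set.Ioi (1 : ℝ)) := by
    have h := hint3.const_mul γ
    simp only [mul_div_assoc]
    exact h
  have hsplit : (∫ x in Set.Ioi (1 : ℝ), (‖deriv f x‖ ^ 2
        - γ * ‖f x‖ ^ 2 / (x + π * Real.cot θ) ^ 2))
      = (∫ x in Set.Ioi (1 : ℝ), ‖deriv f x‖ ^ 2)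
        - γ * ∫ x in Set.Ioi (1 : ℝ), ‖f x‖ ^ 2 / (x + π * Real.cot θ) ^ 2 := by
    rw [integral_sub hint_df.integrableOn hint3γ]
    congr 1
    rw [← integral_const_mul]
    refine integral_congr_ae (Filter.Eventually.of_forall fun x => ?_)
    simp only [mul_div_assoc]
  rw [hsplit] at hlt
  have hfinal : (1 - E) * ∫ x in Set.Ioi (1 : ℝ), ‖f x‖ ^ 2
      = -E * (∫ x in Set.Ioi (1 : ℝ), ‖f x‖ ^ 2) + ∫ x in Set.Ioi (1 : ℝ), ‖f x‖ ^ 2 := by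
    ring
  rw [part1, hfinal]
  linarith [part2]
end
end
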